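/- arXiv:2403.16165 — 8 statements merged into one kernel-verified Lean document; each statement's English description precedes it below -/
import Mathlib

section
/- Let X, Y be Banach spaces and F : X → Set Y a set-valued map with (x̄, ȳ) ∈ graph F. Suppose the inverse map F⁻¹ has a Lipschitz continuous single-valued localization at ȳ for x̄ with Lipschitz constant κ ≥ 0 (i.e., F is strongly regular at x̄ for ȳ with constant κ). If g : X → Y is Lipschitz continuous with constant μ satisfying κμ < 1, then the map x ↦ g(x) + F(x) is strongly regular at x̄ for g(x̄) + ȳ with constant κ/(1 − κμ). -/
open Filter

/-- `F` is strongly regular at `xb` for `yb` with constant `κ`: the inverse map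
`F⁻¹` has a Lipschitz continuous single-valued localization at `yb` for `xb`
with Lipschitz constant `κ`. -/
def StrongRegularAt {X Y : Type*} [NormedAddCommGroup X] [NormedAddCommGroup Y]
    (F : X → Set Y) (xb : X) (yb : Y) (κ : ℝ) : Prop :=
  ∃ s : Y → X, ∃ U ∈ nhds yb, ∃ V ∈ nhds xb,
    (∀ y ∈ U, {x : X | y ∈ F x} ∩ V = {s y}) ∧
    (∀ y ∈ U, ∀ y' ∈ U, ‖s y - s y'‖ ≤ κ * ‖y - y'‖)

theorem strong_regularity_perturbation
    {X Y : Type*} [NormedAddCommGroup X] [NormedSpace ℝ X] [CompleteSpace X]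
    [NormedAddCommGroup Y] [NormedSpace ℝ Y] [CompleteSpace Y]
    (F : X → Set Y) (xb : X) (yb : Y) (κ μ : ℝ)
    (hgraph : yb ∈ F xb) (hκ : 0 ≤ κ)
    (hreg : StrongRegularAt F xb yb κ)
    (g : X → Y) (hμ : 0 ≤ μ) (hg : ∀ x x' : X, ‖g x - g x'‖ ≤ μ * ‖x - x'‖)
    (hsmall : κ * μ < 1) :
    StrongRegularAt (fun x => (fun w => g x + w) '' F x) xb (g xb + yb)
      (κ / (1 - κ * μ)) := by
  classical
  obtain ⟨s, U, hU, V, hV, hloc, hlip⟩ := hreg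
  have hxbV : xb ∈ V := mem_of_mem_nhds hV
  have hybU : yb ∈ U := mem_of_mem_nhds hU
  have hsyb : s yb = xb := by
    have hmem : xb ∈ {x : X | yb ∈ F x} ∩ V := ⟨hgraph, hxbV⟩
    rw [hloc yb hybU] at hmem
    exact hmem.symm
  obtain ⟨a, ha, haU⟩ := Metric.nhds_basis_closedBall.mem_iff.mp hU
  obtain ⟨b, hb, hbV⟩ := Metric.nhds_basis_closedBall.mem_iff.mp hV
  have hκμ : 0 < 1 - κ * μ := by linarith
  set r : ℝ := min b (a / (2 * (μ + 1))) with hr_def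
  have hr : 0 < r := lt_min hb (by positivity)
  set δ : ℝ := min (a / 2) ((1 - κ * μ) * r / (κ + 1)) with hδ_def
  have hδ : 0 < δ := lt_min (by positivity) (by positivity)
  have hμr : μ * r ≤ a / 2 := by
    have h1 : r ≤ a / (2 * (μ + 1)) := min_le_right _ _
    have h2 : μ * r ≤ μ * (a / (2 * (μ + 1))) := mul_le_mul_of_nonneg_left h1 hμ
    have h3 : μ * (a / (2 * (μ + 1))) ≤ a / 2 := by
      rw [mul_div_assoc', div_le_div_iff₀ (by positivity) two_pos]
      nlinarith
    linarith
  have hκδ : κ * δ ≤ (1 - κ * μ) * r := by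
    have h1 : δ ≤ (1 - κ * μ) * r / (κ + 1) := min_le_right _ _
    have h2 : κ * δ ≤ κ * ((1 - κ * μ) * r / (κ + 1)) := mul_le_mul_of_nonneg_left h1 hκ
    have h3 : κ * ((1 - κ * μ) * r / (κ + 1)) ≤ (1 - κ * μ) * r := by
      rw [mul_div_assoc', div_le_iff₀ (by positivity)]
      nlinarith [mul_nonneg hκμ.le hr.le]
    linarith
  -- norm estimate
  have hAnorm : ∀ y ∈ Metric.closedBall (g xb + yb) δ, ∀ x ∈ Metric.closedBall xb r,
      ‖y - g x - yb‖ ≤ δ + μ * r := by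
    intro y hy x hx
    rw [Metric.mem_closedBall, dist_eq_norm] at hy hx
    have h1 : y - g x - yb = (y - (g xb + yb)) + (g xb - g x) := by abel
    have h2 : ‖g xb - g x‖ ≤ μ * ‖xb - x‖ := hg xb x
    rw [norm_sub_rev xb x] at h2
    have h4 : μ * ‖x - xb‖ ≤ μ * r := mul_le_mul_of_nonneg_left hx hμ
    calc ‖y - g x - yb‖ ≤ ‖y - (g xb + yb)‖ + ‖g xb - g x‖ := by rw [h1]; exact norm_add_le _ _
      _ ≤ δ + μ * r := by linarith
  have hA : ∀ y ∈ Metric.closedBall (g xb + yb) δ, ∀ x ∈ Metric.closedBall xb r,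
      y - g x ∈ U := by
    intro y hy x hx
    apply haU
    rw [Metric.mem_closedBall, dist_eq_norm]
    have h1 := hAnorm y hy x hx
    have h2 : δ ≤ a / 2 := min_le_left _ _
    linarith
  -- self-map property
  have hB : ∀ y ∈ Metric.closedBall (g xb + yb) δ, ∀ x ∈ Metric.closedBall xb r,
      s (y - g x) ∈ Metric.closedBall xb r := by
    intro y hy x hx
    have hU1 : y - g x ∈ U := hA y hy x hx
    have h1 : ‖s (y - g x) - s yb‖ ≤ κ * ‖y - g x - yb‖ := hlip _ hU1 yb hybU
    rw [hsyb] at h1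
    have h2 := hAnorm y hy x hx
    have h3 : κ * ‖y - g x - yb‖ ≤ κ * (δ + μ * r) := mul_le_mul_of_nonneg_left h2 hκ
    rw [Metric.mem_closedBall, dist_eq_norm]
    nlinarith
  -- contraction property
  have hC : ∀ y ∈ Metric.closedBall (g xb + yb) δ, ∀ x ∈ Metric.closedBall xb r,
      ∀ x' ∈ Metric.closedBall xb r,
      ‖s (y - g x) - s (y - g x')‖ ≤ (κ * μ) * ‖x - x'‖ := by
    intro y hy x hx x' hx'
    have h1 := hlip _ (hA y hy x hx) _ (hA y hy x' hx')
    have h2 : (y - g x) - (y - g x') = g x' - g x := by abel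
    rw [h2] at h1
    have h3 : ‖g x' - g x‖ ≤ μ * ‖x' - x‖ := hg x' x
    have h4 : κ * ‖g x' - g x‖ ≤ κ * (μ * ‖x' - x‖) := mul_le_mul_of_nonneg_left h3 hκ
    have h5 : κ * (μ * ‖x' - x‖) = κ * μ * ‖x - x'‖ := by rw [norm_sub_rev x' x]; ring
    linarith
  -- fixed point existence
  have hfix : ∀ y ∈ Metric.closedBall (g xb + yb) δ,
      ∃ x ∈ Metric.closedBall xb r, s (y - g x) = x := by
    intro y hy
    set K : NNReal := ⟨κ * μ, mul_nonneg hκ hμ⟩ with hK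
    have hsf : Set.MapsTo (fun x => s (y - g x)) (Metric.closedBall xb r)
        (Metric.closedBall xb r) := fun x hx => hB y hy x hx
    have hcontr : ContractingWith K (hsf.restrict _ _ _) := by
      constructor
      · exact_mod_cast hsmall
      · apply LipschitzWith.of_dist_le_mul
        intro x x'
        have h1 := hC y hy x.1 x.2 x'.1 x'.2
        rw [Subtype.dist_eq, Subtype.dist_eq]
        simp only [Set.MapsTo.val_restrict_apply]
        rw [dist_eq_norm, dist_eq_norm]
        exact h1
    obtain ⟨x, hxmem, hfx, -, -⟩ := hcontr.exists_fixedPoint'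
      Metric.isClosed_closedBall.isComplete hsf (Metric.mem_closedBall_self hr.le) (edist_ne_top _ _)
    exact ⟨x, hxmem, hfx⟩
  choose! s' hmem hfp using hfix
  -- uniqueness of fixed points
  have huniq : ∀ y ∈ Metric.closedBall (g xb + yb) δ, ∀ x ∈ Metric.closedBall xb r,
      s (y - g x) = x → x = s' y := by
    intro y hy x hx hfx
    have h1 := hC y hy x hx (s' y) (hmem y hy)
    rw [hfx, hfp y hy] at h1
    have h2 : (1 - κ * μ) * ‖x - s' y‖ ≤ (1 - κ * μ) * 0 := by nlinarith [norm_nonneg (x - s' y)]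
    have h3 : ‖x - s' y‖ ≤ 0 := le_of_mul_le_mul_left h2 hκμ
    have h4 : ‖x - s' y‖ = 0 := le_antisymm h3 (norm_nonneg _)
    exact sub_eq_zero.mp (norm_eq_zero.mp h4)
  refine ⟨s', Metric.closedBall (g xb + yb) δ, Metric.closedBall_mem_nhds _ hδ,
    Metric.closedBall xb r, Metric.closedBall_mem_nhds _ hr, ?_, ?_⟩
  · intro y hy
    ext x
    simp only [Set.mem_inter_iff, Set.mem_setOf_eq, Set.mem_image, Set.mem_singleton_iff]
    constructor
    · rintro ⟨⟨w, hwF, hw⟩, hxV'⟩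
      have hw' : y - g x = w := by rw [← hw]; abel
      have hFx : y - g x ∈ F x := hw' ▸ hwF
      have hxV : x ∈ V := hbV (Metric.closedBall_subset_closedBall (min_le_left _ _) hxV')
      have hx2 : x ∈ {z : X | y - g x ∈ F z} ∩ V := ⟨hFx, hxV⟩
      rw [hloc _ (hA y hy x hxV')] at hx2
      exact huniq y hy x hxV' hx2.symm
    · rintro rfl
      refine ⟨⟨y - g (s' y), ?_, by abel⟩, hmem y hy⟩
      have hUy : y - g (s' y) ∈ U := hA y hy _ (hmem y hy)
      have h1 : s (y - g (s' y)) ∈ {x : X | y - g (s' y) ∈ F x} ∩ V := by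
        rw [hloc _ hUy]; rfl
      rw [hfp y hy] at h1
      exact h1.1
  · intro y hy y' hy'
    have h1 := hlip _ (hA y hy _ (hmem y hy)) _ (hA y' hy' _ (hmem y' hy'))
    rw [hfp y hy, hfp y' hy'] at h1
    have h2 : ‖(y - g (s' y)) - (y' - g (s' y'))‖ ≤ ‖y - y'‖ + ‖g (s' y') - g (s' y)‖ := by
      have heq : (y - g (s' y)) - (y' - g (s' y')) = (y - y') + (g (s' y') - g (s' y)) := by abel
      rw [heq]; exact norm_add_le _ _
    have h3 : ‖g (s' y') - g (s' y)‖ ≤ μ * ‖s' y' - s' y‖ := hg _ _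
    rw [norm_sub_rev (s' y') (s' y)] at h3
    have h4 : ‖s' y - s' y'‖ ≤ κ * (‖y - y'‖ + μ * ‖s' y - s' y'‖) :=
      le_trans h1 (mul_le_mul_of_nonneg_left (by linarith) hκ)
    rw [div_mul_eq_mul_div, le_div_iff₀ hκμ]
    nlinarith [norm_nonneg (y - y')]
end

section
/- Let X, Y be Banach spaces and F : X → Set Y with (x̄, ȳ) ∈ graph F. Suppose F is strongly subregular at x̄ for ȳ with constant κ (i.e., F⁻¹ has the isolated calmness property at ȳ for x̄ with constant κ). If g : X → Y is Lipschitz continuous with constant μ satisfying κμ < 1, then g + F is strongly subregular at x̄ for g(x̄) + ȳ with constant κ/(1 − κμ). -/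
open Filter

/-- `F` is strongly subregular at `xb` for `yb` with constant `κ`: the inverse map
`F⁻¹` has the isolated calmness property at `yb` for `xb` with constant `κ`. -/
def StrongSubregularAt {X Y : Type*} [NormedAddCommGroup X] [NormedAddCommGroup Y]
    (F : X → Set Y) (xb : X) (yb : Y) (κ : ℝ) : Prop :=
  ∃ U ∈ nhds yb, ∃ V ∈ nhds xb,
    ({x : X | yb ∈ F x} ∩ V = {xb}) ∧
    (∀ y ∈ U, ∀ x ∈ {x : X | y ∈ F x} ∩ V, ‖x - xb‖ ≤ κ * ‖y - yb‖)

theorem strong_subregularity_perturbation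
    {X Y : Type*} [NormedAddCommGroup X] [NormedSpace ℝ X] [CompleteSpace X]
    [NormedAddCommGroup Y] [NormedSpace ℝ Y] [CompleteSpace Y]
    (F : X → Set Y) (xb : X) (yb : Y) (κ μ : ℝ)
    (hgraph : yb ∈ F xb) (hκ : 0 ≤ κ)
    (hreg : StrongSubregularAt F xb yb κ)
    (g : X → Y) (hμ : 0 ≤ μ) (hg : ∀ x x' : X, ‖g x - g x'‖ ≤ μ * ‖x - x'‖)
    (hsmall : κ * μ < 1) :
    StrongSubregularAt (fun x => (fun w => g x + w) '' F x) xb (g xb + yb)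
      (κ / (1 - κ * μ)) := by
  obtain ⟨U, hU, V, hV, huniq, hest⟩ := hreg
  obtain ⟨ε, hε, hball⟩ := Metric.mem_nhds_iff.mp hU
  have h1 : 0 < 1 - κ * μ := by linarith
  set δ : ℝ := ε / (2 * (μ + 1)) with hδdef
  have hδ : 0 < δ := by positivity
  -- membership characterization
  have hmem : ∀ (y : Y) (x : X), y ∈ (fun w => g x + w) '' F x ↔ y - g x ∈ F x := by
    intro y x
    constructor
    · rintro ⟨w, hw, rfl⟩; simpa using hw
    · intro h; exact ⟨y - g x, h, by simp⟩
  -- key estimate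
  have key : ∀ y ∈ Metric.ball (g xb + yb) (ε / 2),
      ∀ x ∈ V ∩ Metric.ball xb δ, y - g x ∈ F x →
      ‖x - xb‖ ≤ κ / (1 - κ * μ) * ‖y - (g xb + yb)‖ := by
    intro y hy x hx hFx
    have hxV : x ∈ V := hx.1
    have hxδ : ‖x - xb‖ < δ := by
      simpa [dist_eq_norm] using hx.2
    have hgx : ‖g x - g xb‖ ≤ μ * ‖x - xb‖ := hg x xb
    have hyU : y - g x ∈ U := by
      apply hball
      have : ‖y - g x - yb‖ ≤ ‖y - (g xb + yb)‖ + ‖g xb - g x‖ := by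
        have : y - g x - yb = (y - (g xb + yb)) + (g xb - g x) := by abel
        rw [this]; exact norm_add_le _ _
      have h2 : ‖g xb - g x‖ ≤ μ * ‖x - xb‖ := by
        rw [norm_sub_rev]; exact hgx
      have h3 : μ * ‖x - xb‖ < ε / 2 := by
        calc μ * ‖x - xb‖ ≤ μ * δ := by
              exact mul_le_mul_of_nonneg_left hxδ.le hμ
          _ < (μ + 1) * δ := by nlinarith
          _ = ε / 2 := by rw [hδdef]; field_simp
      have hy' : ‖y - (g xb + yb)‖ < ε / 2 := by
        simpa [dist_eq_norm] using hy
      simp only [Metric.mem_ball, dist_eq_norm]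
      linarith
    have hbase : ‖x - xb‖ ≤ κ * ‖y - g x - yb‖ := hest _ hyU x ⟨hFx, hxV⟩
    have htri : ‖y - g x - yb‖ ≤ ‖y - (g xb + yb)‖ + μ * ‖x - xb‖ := by
      have heq : y - g x - yb = (y - (g xb + yb)) + (g xb - g x) := by abel
      calc ‖y - g x - yb‖ = ‖(y - (g xb + yb)) + (g xb - g x)‖ := by rw [heq]
        _ ≤ ‖y - (g xb + yb)‖ + ‖g xb - g x‖ := norm_add_le _ _
        _ ≤ ‖y - (g xb + yb)‖ + μ * ‖x - xb‖ := by
            have : ‖g xb - g x‖ ≤ μ * ‖x - xb‖ := by rw [norm_sub_rev]; exact hg x xb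
            linarith
    have : ‖x - xb‖ ≤ κ * ‖y - (g xb + yb)‖ + κ * μ * ‖x - xb‖ := by
      calc ‖x - xb‖ ≤ κ * ‖y - g x - yb‖ := hbase
        _ ≤ κ * (‖y - (g xb + yb)‖ + μ * ‖x - xb‖) :=
            mul_le_mul_of_nonneg_left htri hκ
        _ = κ * ‖y - (g xb + yb)‖ + κ * μ * ‖x - xb‖ := by ring
    rw [div_mul_eq_mul_div, le_div_iff₀ h1]
    nlinarith
  refine ⟨Metric.ball (g xb + yb) (ε / 2), Metric.ball_mem_nhds _ (by positivity),
    V ∩ Metric.ball xb δ, Filter.inter_mem hV (Metric.ball_mem_nhds _ hδ), ?_, ?_⟩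
  · ext x
    simp only [Set.mem_inter_iff, Set.mem_setOf_eq, Set.mem_singleton_iff]
    constructor
    · rintro ⟨hmem', hxV⟩
      have hFx : g xb + yb - g x ∈ F x := (hmem _ _).mp hmem'
      have := key (g xb + yb) (Metric.mem_ball_self (by positivity)) x hxV hFx
      simp only [sub_self, norm_zero, mul_zero] at this
      have : ‖x - xb‖ = 0 := le_antisymm this (norm_nonneg _)
      have := norm_eq_zero.mp this
      exact sub_eq_zero.mp this
    · rintro rfl
      refine ⟨(hmem _ _).mpr (by simpa using hgraph), mem_of_mem_nhds hV,
        Metric.mem_ball_self hδ⟩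
  · intro y hy x hx
    obtain ⟨hmem', hxV⟩ := hx
    exact key y hy x hxV ((hmem _ _).mp hmem')
end

section
/- Let f : Z × V → Z' and H(z,v) : Z → Z' define the perturbed Josephy-Newton iteration 0 ∈ f(z_k, v_k) + H(z_k, v_k)(z_{k+1} − z_k) + F(z_{k+1}), and set f_H(z, ζ, v) = f(ζ, v) + H(ζ, v)(z − ζ). Assume: (a) z̄ solves 0 ∈ f(·,0) + F; (b) f_H(·, ζ, v) is Lipschitz uniformly in (ζ,v) near (z̄, z̄, 0); (c) f_H(z, ·, v) is Lipschitz with constant γ_z uniformly in (z,v) near (z̄, z̄, 0); (d) f_H(z, ζ, ·) is Lipschitz with constant γ_v uniformly in (z, ζ) near (z̄, z̄, 0); (e) f_H(·, z̄, 0) + F is strongly regular at z̄ for 0 with constant κ; and κγ_z < 1. Then for (z_k, v_k) sufficiently close to (z̄, 0), the iterate z_{k+1} exists, is locally unique, and satisfies ‖z_{k+1} − z̄‖ ≤ κγ_z‖z_k − z̄‖ + κγ_v‖v_k‖; hence the iteration is locally input-to-state stable around z̄. -/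
open Filter

theorem josephy_newton_iss
    {Z Z' V : Type*} [NormedAddCommGroup Z] [NormedSpace ℝ Z] [CompleteSpace Z]
    [NormedAddCommGroup Z'] [NormedSpace ℝ Z'] [CompleteSpace Z']
    [NormedAddCommGroup V] [NormedSpace ℝ V]
    (f : Z → V → Z') (H : Z → V → (Z →L[ℝ] Z')) (F : Z → Set Z')
    (zb : Z) (κ γz γv : ℝ) (hκ : 0 < κ) (hγz : 0 < γz) (hγv : 0 < γv)
    -- (a) `zb` solves `0 ∈ f(·,0) + F`
    (hsol : -f zb 0 ∈ F zb)
    -- `f_H (z, ζ, v) = f ζ v + H ζ v (z - ζ)` below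
    -- (b) `f_H(·, ζ, v)` Lipschitz uniformly in `(ζ, v)` near `(zb, zb, 0)`
    (hb : ∃ κ' : ℝ, ∃ U ∈ nhds zb, ∃ W ∈ nhds (0 : V),
      ∀ ζ ∈ U, ∀ v ∈ W, ∀ z ∈ U, ∀ z' ∈ U,
        ‖(f ζ v + H ζ v (z - ζ)) - (f ζ v + H ζ v (z' - ζ))‖ ≤ κ' * ‖z - z'‖)
    -- (c) `f_H(z, ·, v)` Lipschitz with constant `γz` uniformly in `(z, v)`
    (hc : ∃ U ∈ nhds zb, ∃ W ∈ nhds (0 : V),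
      ∀ z ∈ U, ∀ v ∈ W, ∀ ζ ∈ U, ∀ ζ' ∈ U,
        ‖(f ζ v + H ζ v (z - ζ)) - (f ζ' v + H ζ' v (z - ζ'))‖ ≤ γz * ‖ζ - ζ'‖)
    -- (d) `f_H(z, ζ, ·)` Lipschitz with constant `γv` uniformly in `(z, ζ)`
    (hd : ∃ U ∈ nhds zb, ∃ W ∈ nhds (0 : V),
      ∀ z ∈ U, ∀ ζ ∈ U, ∀ v ∈ W, ∀ v' ∈ W,
        ‖(f ζ v + H ζ v (z - ζ)) - (f ζ v' + H ζ v' (z - ζ))‖ ≤ γv * ‖v - v'‖)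
    -- (e) `f_H(·, zb, 0) + F` strongly regular at `zb` for `0` with constant `κ`
    (he : StrongRegularAt (fun z => (fun w => f zb 0 + H zb 0 (z - zb) + w) '' F z)
      zb 0 κ)
    (hsmall : κ * γz < 1) :
    -- conclusion: for `(z_k, v_k)` close to `(zb, 0)`, the Newton step exists,
    -- is locally unique, and satisfies the ISS estimate
    ∃ δ > 0, ∃ ε > 0, ∀ zk : Z, ∀ vk : V, ‖zk - zb‖ < δ → ‖vk‖ < δ →
      (∃! z' : Z, ‖z' - zb‖ < ε ∧
        -(f zk vk + H zk vk (z' - zk)) ∈ F z') ∧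
      (∀ z' : Z, ‖z' - zb‖ < ε →
        -(f zk vk + H zk vk (z' - zk)) ∈ F z' →
        ‖z' - zb‖ ≤ κ * γz * ‖zk - zb‖ + κ * γv * ‖vk‖) := by
  clear hb hsmall
  obtain ⟨sl, U, hU, Vs, hVs, hloc, hlip⟩ := he
  obtain ⟨Uc, hUc, Wc, hWc, hC⟩ := hc
  obtain ⟨Ud, hUd, Wd, hWd, hD⟩ := hd
  obtain ⟨ru, hru, hUball⟩ := Metric.mem_nhds_iff.mp hU
  obtain ⟨r, hr, hrball⟩ := Metric.nhds_basis_closedBall.mem_iff.mp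
    (Filter.inter_mem hVs (Filter.inter_mem hUc hUd))
  obtain ⟨w, hw, hwball⟩ := Metric.mem_nhds_iff.mp (Filter.inter_mem hWc hWd)
  have hballV : ∀ z ∈ Metric.closedBall zb r, z ∈ Vs := fun z hz => (hrball hz).1
  have hballUc : ∀ z ∈ Metric.closedBall zb r, z ∈ Uc := fun z hz => (hrball hz).2.1
  have hballUd : ∀ z ∈ Metric.closedBall zb r, z ∈ Ud := fun z hz => (hrball hz).2.2
  have hzbball : zb ∈ Metric.closedBall zb r := Metric.mem_closedBall_self hr.le
  have h0Wc : (0:V) ∈ Wc := (hwball (Metric.mem_ball_self hw)).1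
  have h0Wd : (0:V) ∈ Wd := (hwball (Metric.mem_ball_self hw)).2
  have h0U : (0:Z') ∈ U := hUball (Metric.mem_ball_self hru)
  set γ : ℝ := γz + γv with hγdef
  have hγ : 0 < γ := by positivity
  set δ : ℝ := min (min r w) (min (ru / (2*γ)) (r / (8*κ*γ))) with hδdef
  have hδpos : 0 < δ := lt_min (lt_min hr hw) (lt_min (by positivity) (by positivity))
  have hδr : δ ≤ r := le_trans (min_le_left _ _) (min_le_left _ _)
  have hδw : δ ≤ w := le_trans (min_le_left _ _) (min_le_right _ _)
  have hδu : δ ≤ ru/(2*γ) := le_trans (min_le_right _ _) (min_le_left _ _)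
  have hδk : δ ≤ r/(8*κ*γ) := le_trans (min_le_right _ _) (min_le_right _ _)
  -- `sl 0 = zb`
  have hs0 : sl 0 = zb := by
    have h := hloc 0 h0U
    have hzbmem : zb ∈ ({x : Z |
        (0:Z') ∈ (fun w => f zb 0 + H zb 0 (x - zb) + w) '' F x} ∩ Vs) := by
      refine ⟨⟨-f zb 0, hsol, ?_⟩, hballV zb hzbball⟩
      simp
    rw [h] at hzbmem
    exact hzbmem.symm
  refine ⟨δ, hδpos, r, hr, fun zk vk hzk hvk => ?_⟩
  have hzkr : zk ∈ Metric.closedBall zb r := by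
    rw [Metric.mem_closedBall, dist_eq_norm]; exact le_of_lt (lt_of_lt_of_le hzk hδr)
  have hzkUc := hballUc zk hzkr
  have hzkUd := hballUd zk hzkr
  have hvkW : vk ∈ Metric.ball (0:V) w := by
    rw [Metric.mem_ball, dist_zero_right]; exact lt_of_lt_of_le hvk hδw
  have hvkWc : vk ∈ Wc := (hwball hvkW).1
  have hvkWd : vk ∈ Wd := (hwball hvkW).2
  set p : Z → Z' := fun z => (f zb 0 + H zb 0 (z - zb)) - (f zk vk + H zk vk (z - zk))
    with hpdef
  set M : ℝ := γz * ‖zk - zb‖ + γv * ‖vk‖ with hMdef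
  have hM0 : 0 ≤ M := by positivity
  have hMδ : M ≤ γ * δ := by
    have h1 : γz * ‖zk - zb‖ ≤ γz * δ := mul_le_mul_of_nonneg_left hzk.le hγz.le
    have h2 : γv * ‖vk‖ ≤ γv * δ := mul_le_mul_of_nonneg_left hvk.le hγv.le
    rw [hMdef, hγdef]; nlinarith
  -- norm bound on the perturbation `p`
  have hA : ∀ z ∈ Metric.closedBall zb r, ‖p z‖ ≤ M := by
    intro z hz
    have h1 := hC z (hballUc z hz) 0 h0Wc zb (hballUc zb hzbball) zk hzkUc
    have h2 := hD z (hballUd z hz) zk hzkUd 0 h0Wd vk hvkWd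
    have heq : p z = ((f zb 0 + H zb 0 (z - zb)) - (f zk 0 + H zk 0 (z - zk)))
        + ((f zk 0 + H zk 0 (z - zk)) - (f zk vk + H zk vk (z - zk))) := by
      simp only [hpdef]; abel
    rw [heq]
    calc ‖_ + _‖ ≤ _ + _ := norm_add_le _ _
      _ ≤ γz * ‖zb - zk‖ + γv * ‖(0:V) - vk‖ := add_le_add h1 h2
      _ = M := by rw [hMdef, norm_sub_rev, zero_sub, norm_neg]
  -- bound on the difference of the linear operators
  have hB : ∀ w' : Z, ‖H zb 0 w' - H zk vk w'‖ ≤ (2*M/r) * ‖w'‖ := by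
    intro w'
    rcases eq_or_ne w' 0 with rfl | hw'
    · simp
    have hnw : 0 < ‖w'‖ := norm_pos_iff.mpr hw'
    set u : Z := (r / ‖w'‖) • w' with hudef
    have hnu : ‖u‖ = r := by
      rw [hudef, norm_smul, Real.norm_eq_abs, abs_of_nonneg (by positivity),
        div_mul_cancel₀ _ hnw.ne']
    have huball : zb + u ∈ Metric.closedBall zb r := by
      rw [Metric.mem_closedBall, dist_eq_norm, add_sub_cancel_left, hnu]
    have hdiff : H zb 0 u - H zk vk u = p (zb + u) - p zb := by
      simp only [hpdef]
      rw [show zb + u - zb = u from by abel, sub_self, map_zero,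
        show zb + u - zk = (zb - zk) + u from by abel, map_add]
      abel
    have hbound : ‖H zb 0 u - H zk vk u‖ ≤ 2*M := by
      rw [hdiff]
      calc ‖p (zb+u) - p zb‖ ≤ ‖p (zb+u)‖ + ‖p zb‖ := norm_sub_le _ _
        _ ≤ M + M := add_le_add (hA _ huball) (hA _ hzbball)
        _ = 2*M := by ring
    have huw : (‖w'‖/r) • u = w' := by
      rw [hudef, smul_smul, show ‖w'‖/r * (r/‖w'‖) = 1 from by
        field_simp, one_smul]
    have hwu : H zb 0 w' - H zk vk w' = (‖w'‖/r) • (H zb 0 u - H zk vk u) := by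
      rw [smul_sub, ← map_smul, ← map_smul, huw]
    calc ‖H zb 0 w' - H zk vk w'‖ = (‖w'‖/r) * ‖H zb 0 u - H zk vk u‖ := by
          rw [hwu, norm_smul, Real.norm_eq_abs, abs_of_nonneg (by positivity)]
      _ ≤ (‖w'‖/r) * (2*M) := mul_le_mul_of_nonneg_left hbound (by positivity)
      _ = (2*M/r) * ‖w'‖ := by ring
  have hLip : ∀ z z' : Z, ‖p z - p z'‖ ≤ (2*M/r) * ‖z - z'‖ := by
    intro z z'
    have heq : p z - p z' = H zb 0 (z - z') - H zk vk (z - z') := by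
      simp only [hpdef, map_sub]; abel
    rw [heq]; exact hB _
  -- numeric facts
  have h8 : 8*κ*γ*δ ≤ r := by
    have h := (le_div_iff₀ (by positivity : (0:ℝ) < 8*κ*γ)).mp hδk
    linarith
  have hκM : κ * M ≤ r/8 := by nlinarith [mul_le_mul_of_nonneg_left hMδ hκ.le]
  have hκMr : κ * M < r := lt_of_le_of_lt hκM (by linarith)
  have hcontr : κ * (2*M/r) ≤ 1/2 := by
    rw [show κ * (2*M/r) = (2*(κ*M))/r from by ring, div_le_iff₀ hr]
    linarith
  have hMru : M < ru := by
    have h1 : γ * δ ≤ γ * (ru/(2*γ)) := mul_le_mul_of_nonneg_left hδu hγ.le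
    have h2 : γ * (ru/(2*γ)) = ru/2 := by field_simp
    have h3 : M ≤ ru/2 := hMδ.trans (h2 ▸ h1)
    have h4 : ru/2 < ru := by linarith
    exact lt_of_le_of_lt h3 h4
  have hpU : ∀ z ∈ Metric.closedBall zb r, p z ∈ U := by
    intro z hz
    apply hUball
    rw [Metric.mem_ball, dist_zero_right]
    exact lt_of_le_of_lt (hA z hz) hMru
  -- the Newton map
  set Φ : Z → Z := fun z => sl (p z) with hΦdef
  have hΦest : ∀ z ∈ Metric.closedBall zb r, ‖Φ z - zb‖ ≤ κ * M := by
    intro z hz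
    calc ‖Φ z - zb‖ = ‖sl (p z) - sl 0‖ := by rw [hΦdef, hs0]
      _ ≤ κ * ‖p z - 0‖ := hlip _ (hpU z hz) 0 h0U
      _ = κ * ‖p z‖ := by rw [sub_zero]
      _ ≤ κ * M := mul_le_mul_of_nonneg_left (hA z hz) hκ.le
  have hΦmaps : Set.MapsTo Φ (Metric.closedBall zb r) (Metric.closedBall zb r) := by
    intro z hz
    rw [Metric.mem_closedBall, dist_eq_norm]
    exact le_trans (hΦest z hz) hκMr.le
  have hΦcontr : ∀ z ∈ Metric.closedBall zb r, ∀ z' ∈ Metric.closedBall zb r,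
      dist (Φ z) (Φ z') ≤ (1/2) * dist z z' := by
    intro z hz z' hz'
    rw [dist_eq_norm, dist_eq_norm]
    calc ‖Φ z - Φ z'‖ = ‖sl (p z) - sl (p z')‖ := by rw [hΦdef]
      _ ≤ κ * ‖p z - p z'‖ := hlip _ (hpU z hz) _ (hpU z' hz')
      _ ≤ κ * ((2*M/r) * ‖z - z'‖) := mul_le_mul_of_nonneg_left (hLip z z') hκ.le
      _ = (κ * (2*M/r)) * ‖z - z'‖ := by ring
      _ ≤ (1/2) * ‖z - z'‖ := mul_le_mul_of_nonneg_right hcontr (norm_nonneg _)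
  -- Banach fixed point
  have hsc : IsComplete (Metric.closedBall zb r) := Metric.isClosed_closedBall.isComplete
  have hK : ContractingWith (1/2 : NNReal) (hΦmaps.restrict Φ _ _) := by
    constructor
    · rw [← NNReal.coe_lt_coe]; norm_num
    · apply LipschitzWith.of_dist_le_mul
      rintro ⟨x, hx⟩ ⟨y, hy⟩
      show dist (Φ x) (Φ y) ≤ ((1/2 : NNReal) : ℝ) * dist x y
      rw [show ((1/2 : NNReal) : ℝ) = 1/2 from by norm_num]
      exact hΦcontr x hx y hy
  obtain ⟨zs, hzsmem, hzsfix, -, -⟩ := ContractingWith.exists_fixedPoint' hsc hΦmaps hK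
    hzbball (edist_ne_top _ _)
  have huniq : ∀ z ∈ Metric.closedBall zb r, Φ z = z → z = zs := by
    intro z hz hfz
    have h := hΦcontr z hz zs hzsmem
    rw [hfz, hzsfix.eq] at h
    have h0 : dist z zs = 0 := by
      have := dist_nonneg (x := z) (y := zs)
      linarith
    exact dist_eq_zero.mp h0
  -- solution characterization
  have hGiff : ∀ z' : Z, -(f zk vk + H zk vk (z' - zk)) ∈ F z' ↔
      p z' ∈ (fun w => f zb 0 + H zb 0 (z' - zb) + w) '' F z' := by
    intro z'
    constructor
    · intro h
      refine ⟨-(f zk vk + H zk vk (z' - zk)), h, ?_⟩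
      simp only [hpdef]; abel
    · rintro ⟨w0, hw0, heq⟩
      have heq' : f zb 0 + H zb 0 (z' - zb) + w0 = p z' := heq
      have h2 : f zb 0 + H zb 0 (z' - zb) + w0
          = (f zb 0 + H zb 0 (z' - zb)) + -(f zk vk + H zk vk (z' - zk)) := by
        rw [heq']; simp only [hpdef]; abel
      have h3 : w0 = -(f zk vk + H zk vk (z' - zk)) := add_left_cancel h2
      rwa [h3] at hw0
  have hsoliff : ∀ z' ∈ Metric.closedBall zb r,
      (-(f zk vk + H zk vk (z' - zk)) ∈ F z' ↔ z' = sl (p z')) := by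
    intro z' hz'
    have hloc' := hloc (p z') (hpU z' hz')
    constructor
    · intro h
      have hmem : z' ∈ ({x : Z |
          p z' ∈ (fun w => f zb 0 + H zb 0 (x - zb) + w) '' F x} ∩ Vs) :=
        ⟨(hGiff z').mp h, hballV z' hz'⟩
      rw [hloc'] at hmem
      exact hmem
    · intro h
      have hmem : sl (p z') ∈ ({x : Z |
          p z' ∈ (fun w => f zb 0 + H zb 0 (x - zb) + w) '' F x} ∩ Vs) := by
        rw [hloc']; rfl
      rw [← h] at hmem
      exact (hGiff z').mpr hmem.1
  -- assemble
  have hest : ∀ z' : Z, ‖z' - zb‖ < r → -(f zk vk + H zk vk (z' - zk)) ∈ F z' →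
      ‖z' - zb‖ ≤ κ * γz * ‖zk - zb‖ + κ * γv * ‖vk‖ := by
    intro z' hz' hsolz
    have hzball : z' ∈ Metric.closedBall zb r := by
      rw [Metric.mem_closedBall, dist_eq_norm]; exact hz'.le
    have heq := (hsoliff z' hzball).mp hsolz
    calc ‖z' - zb‖ = ‖sl (p z') - sl 0‖ := by rw [hs0, ← heq]
      _ ≤ κ * ‖p z' - 0‖ := hlip _ (hpU z' hzball) 0 h0U
      _ = κ * ‖p z'‖ := by rw [sub_zero]
      _ ≤ κ * M := mul_le_mul_of_nonneg_left (hA z' hzball) hκ.le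
      _ = κ * γz * ‖zk - zb‖ + κ * γv * ‖vk‖ := by rw [hMdef]; ring
  have hzseq : zs = sl (p zs) := by
    conv_lhs => rw [← hzsfix.eq]
  have hzsnorm : ‖zs - zb‖ < r := by
    have h := hΦest zs hzsmem
    rw [hzsfix.eq] at h
    exact lt_of_le_of_lt h hκMr
  have hzssol : -(f zk vk + H zk vk (zs - zk)) ∈ F zs :=
    (hsoliff zs hzsmem).mpr hzseq
  refine ⟨⟨zs, ⟨hzsnorm, hzssol⟩, ?_⟩, hest⟩
  rintro z' ⟨hz'r, hz'sol⟩
  have hzball : z' ∈ Metric.closedBall zb r := by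
    rw [Metric.mem_closedBall, dist_eq_norm]; exact hz'r.le
  have heq := (hsoliff z' hzball).mp hz'sol
  exact huniq z' hzball (by simp only [hΦdef]; exact heq.symm)
end

section
/- Let sequences {a_k}, {b_k} of nonnegative reals satisfy a_{k+1} ≤ α₁ a_k + γ b_k and b_{k+1} ≤ α₂ b_k + γ_B a_{k+1} for all k, with α₁, α₂ ∈ [0,1) and γ, γ_B ≥ 0. Define ᾱ = max{α₁(1 + γ_B), α₂ + γ(1 + γ_B)}. Then a_{k+1} + b_{k+1} ≤ ᾱ(a_k + b_k) for all k; consequently, if ᾱ < 1 then a_k + b_k ≤ ᾱ^k (a_0 + b_0) → 0. -/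
open Filter

theorem small_gain_coupled_sequences
    (a b : ℕ → ℝ) (α₁ α₂ γ γB abar : ℝ)
    (ha : ∀ k, 0 ≤ a k) (hb : ∀ k, 0 ≤ b k)
    (hα₁ : 0 ≤ α₁) (hα₁1 : α₁ < 1) (hα₂ : 0 ≤ α₂) (hα₂1 : α₂ < 1)
    (hγ : 0 ≤ γ) (hγB : 0 ≤ γB)
    (hreca : ∀ k, a (k + 1) ≤ α₁ * a k + γ * b k)
    (hrecb : ∀ k, b (k + 1) ≤ α₂ * b k + γB * a (k + 1))
    (habar : abar = max (α₁ * (1 + γB)) (α₂ + γ * (1 + γB))) :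
    (∀ k, a (k + 1) + b (k + 1) ≤ abar * (a k + b k)) ∧
    (abar < 1 →
      (∀ k, a k + b k ≤ abar ^ k * (a 0 + b 0)) ∧
      Tendsto (fun k => a k + b k) atTop (nhds 0)) := by
  have habar0 : 0 ≤ abar := by
    rw [habar]
    exact le_trans (by positivity) (le_max_left _ _)
  have h1 : α₁ * (1 + γB) ≤ abar := habar ▸ le_max_left _ _
  have h2 : α₂ + γ * (1 + γB) ≤ abar := habar ▸ le_max_right _ _
  have key : ∀ k, a (k + 1) + b (k + 1) ≤ abar * (a k + b k) := by
    intro k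
    have hb1 := hrecb k
    have ha1 := hreca k
    have step : a (k + 1) + b (k + 1) ≤ (1 + γB) * a (k + 1) + α₂ * b k := by
      nlinarith
    have step2 : (1 + γB) * a (k + 1) + α₂ * b k
        ≤ (α₁ * (1 + γB)) * a k + (α₂ + γ * (1 + γB)) * b k := by
      nlinarith
    have step3 : (α₁ * (1 + γB)) * a k + (α₂ + γ * (1 + γB)) * b k
        ≤ abar * (a k + b k) := by
      nlinarith [mul_le_mul_of_nonneg_right h1 (ha k),
        mul_le_mul_of_nonneg_right h2 (hb k)]
    linarith
  refine ⟨key, fun hlt => ?_⟩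
  have geom : ∀ k, a k + b k ≤ abar ^ k * (a 0 + b 0) := by
    intro k
    induction k with
    | zero => simp
    | succ n ih =>
      calc a (n + 1) + b (n + 1) ≤ abar * (a n + b n) := key n
        _ ≤ abar * (abar ^ n * (a 0 + b 0)) :=
          mul_le_mul_of_nonneg_left ih habar0
        _ = abar ^ (n + 1) * (a 0 + b 0) := by ring
  refine ⟨geom, ?_⟩
  have htt : Tendsto (fun k => abar ^ k * (a 0 + b 0)) atTop (nhds 0) := by
    have := tendsto_pow_atTop_nhds_zero_of_lt_one habar0 hlt
    simpa using this.mul_const (a 0 + b 0)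
  refine squeeze_zero (fun k => add_nonneg (ha k) (hb k)) geom htt
end

section
/- Let f̃ : X × Y × V → Z'' and F̃ : X ⇉ Z'' be such that: f̃(·, ȳ, 0) + F̃ is strongly subregular at x̄ for 0 with constant κ̃; f̃(·, y, v) is Lipschitz uniformly in (y, v) at (x̄, ȳ, 0) with constant small enough that κ̃ times it is < 1; and f̃(x, ·, ·) is Lipschitz with constant γ_w uniformly in x at (x̄, ȳ, 0). Then the solution mapping S : Y × V ⇉ X, S(y, v) = { x | 0 ∈ f̃(x, y, v) + F̃(x) }, has the isolated calmness property at (ȳ, 0) for x̄ with constant κ̃γ_w: there exist neighbourhoods such that for (y, v) near (ȳ, 0) and x ∈ S(y,v) near x̄, ‖x − x̄‖ ≤ κ̃γ_w (‖y − ȳ‖ + ‖v‖). -/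
open Filter

theorem solution_map_isolated_calmness
    {X Y Z'' V : Type*}
    [NormedAddCommGroup X] [NormedSpace ℝ X] [CompleteSpace X]
    [NormedAddCommGroup Y] [NormedSpace ℝ Y] [CompleteSpace Y]
    [NormedAddCommGroup Z''] [NormedSpace ℝ Z''] [CompleteSpace Z'']
    [NormedAddCommGroup V] [NormedSpace ℝ V]
    (ft : X → Y → V → Z'') (Ft : X → Set Z'')
    (xb : X) (yb : Y) (kt γw lam : ℝ)
    (hkt : 0 < kt) (hγw : 0 < γw) (hlam : 0 ≤ lam)
    -- `xb` solves the inner equation at `(yb, 0)`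
    (hsol : -ft xb yb 0 ∈ Ft xb)
    -- `ft(·, yb, 0) + Ft` strongly subregular at `xb` for `0` with constant `kt`
    (hsub : StrongSubregularAt (fun x => (fun w => ft x yb 0 + w) '' Ft x) xb 0 kt)
    -- `ft(·, y, v)` Lipschitz with constant `lam` uniformly in `(y, v)`, `kt * lam < 1`
    (hlip : ∃ U ∈ nhds xb, ∃ W ∈ nhds yb, ∃ N ∈ nhds (0 : V),
      ∀ y ∈ W, ∀ v ∈ N, ∀ x ∈ U, ∀ x' ∈ U,
        ‖ft x y v - ft x' y v‖ ≤ lam * ‖x - x'‖)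
    (hsmall : kt * lam < 1)
    -- `ft(x, ·, ·)` Lipschitz with constant `γw` uniformly in `x`
    (hw : ∃ U ∈ nhds xb, ∃ W ∈ nhds yb, ∃ N ∈ nhds (0 : V),
      ∀ x ∈ U, ∀ y ∈ W, ∀ y' ∈ W, ∀ v ∈ N, ∀ v' ∈ N,
        ‖ft x y v - ft x y' v'‖ ≤ γw * (‖y - y'‖ + ‖v - v'‖)) :
    -- the solution mapping `S(y, v) = {x | 0 ∈ ft(x, y, v) + Ft(x)}` has the
    -- isolated calmness property at `(yb, 0)` for `xb` with constant `kt * γw`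
    ∃ W ∈ nhds yb, ∃ N ∈ nhds (0 : V), ∃ U ∈ nhds xb,
      ({x : X | -ft x yb 0 ∈ Ft x} ∩ U = {xb}) ∧
      ∀ y ∈ W, ∀ v ∈ N, ∀ x ∈ U, -ft x y v ∈ Ft x →
        ‖x - xb‖ ≤ kt * γw * (‖y - yb‖ + ‖v‖) := by
  obtain ⟨U', hU', V', hV', hiso, hest⟩ := hsub
  obtain ⟨Uw, hUw, Ww, hWw, Nw, hNw, hw⟩ := hw
  obtain ⟨ε, hε, hball⟩ := Metric.mem_nhds_iff.mp hU'
  set δ : ℝ := ε / (2 * γw) with hδdef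
  have hδ : 0 < δ := div_pos hε (by linarith)
  refine ⟨Ww ∩ Metric.ball yb δ, inter_mem hWw (Metric.ball_mem_nhds _ hδ),
    Nw ∩ Metric.ball 0 δ, inter_mem hNw (Metric.ball_mem_nhds _ hδ),
    V' ∩ Uw, inter_mem hV' hUw, ?_, ?_⟩
  · ext x
    constructor
    · rintro ⟨hx, hxV, _⟩
      have : x ∈ {x : X | (0 : Z'') ∈ (fun w => ft x yb 0 + w) '' Ft x} ∩ V' :=
        ⟨⟨-ft x yb 0, hx, by simp⟩, hxV⟩
      rw [hiso] at this
      exact this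
    · rintro rfl
      exact ⟨hsol, mem_of_mem_nhds hV', mem_of_mem_nhds hUw⟩
  · rintro y ⟨hyW, hyb⟩ v ⟨hvN, hvb⟩ x ⟨hxV, hxU⟩ hx
    set z : Z'' := ft x yb 0 - ft x y v with hz
    have hzmem : z ∈ (fun w => ft x yb 0 + w) '' Ft x :=
      ⟨-ft x y v, hx, by simp [hz, sub_eq_add_neg]⟩
    have hznorm : ‖z‖ ≤ γw * (‖y - yb‖ + ‖v‖) := by
      have := hw x hxU yb (mem_of_mem_nhds hWw) y hyW 0 (mem_of_mem_nhds hNw) v hvN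
      simpa [hz, norm_sub_rev] using this
    have hzU : z ∈ U' := by
      apply hball
      rw [Metric.mem_ball, dist_zero_right]
      have h1 : ‖y - yb‖ < δ := by simpa [dist_eq_norm] using hyb
      have h2 : ‖v‖ < δ := by simpa [dist_eq_norm] using hvb
      calc ‖z‖ ≤ γw * (‖y - yb‖ + ‖v‖) := hznorm
        _ < γw * (2 * δ) := by
            apply mul_lt_mul_of_pos_left (by linarith) hγw
        _ = ε := by rw [hδdef]; field_simp
    have := hest z hzU x ⟨hzmem, hxV⟩
    simp only [sub_zero] at this
    calc ‖x - xb‖ ≤ kt * ‖z‖ := this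
      _ ≤ kt * (γw * (‖y - yb‖ + ‖v‖)) :=
          mul_le_mul_of_nonneg_left hznorm hkt.le
      _ = kt * γw * (‖y - yb‖ + ‖v‖) := by ring
end

section
/- (Implicit function theorem for generalized equations with two parameters, isolated calmness version.) Consider 0 ∈ f(x, p₁, p₂) + F(x) with solution map S(p₁, p₂) = { x | 0 ∈ f(x,p₁,p₂) + F(x) }, and (x̄, p̄) ∈ graph S. Suppose h : X → Y satisfies: (a) f(x̄, p̄) = h(x̄); (b) h + F is strongly subregular with constant κ at x̄ for 0; (c) f(·, p) − h is Lipschitz with constant μ uniformly in p at (x̄, p̄); (d) f(x, ·, p₂) and f(x, p₁, ·) are Lipschitz with constants γ₁, γ₂ respectively, uniformly in the remaining variables at (x̄, p̄); and κμ < 1. Then S has the isolated calmness property at p̄ for x̄, and for all (p₁, p₂, x) ∈ graph S in a neighbourhood of (p̄, x̄): ‖x − x̄‖ ≤ ω γ₁ ‖p₁ − p̄₁‖ + ω γ₂ ‖p₂ − p̄₂‖, where ω = κ/(1 − κμ). -/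
open Filter

theorem implicit_function_two_parameters_calmness
    {X Y P₁ P₂ : Type*}
    [NormedAddCommGroup X] [NormedSpace ℝ X] [CompleteSpace X]
    [NormedAddCommGroup Y] [NormedSpace ℝ Y] [CompleteSpace Y]
    [NormedAddCommGroup P₁] [NormedSpace ℝ P₁] [CompleteSpace P₁]
    [NormedAddCommGroup P₂] [NormedSpace ℝ P₂] [CompleteSpace P₂]
    (f : X → P₁ → P₂ → Y) (F : X → Set Y) (h : X → Y)
    (xb : X) (pb₁ : P₁) (pb₂ : P₂) (κ μ γ₁ γ₂ : ℝ)
    (hκ : 0 < κ) (hμ : 0 ≤ μ) (hγ₁ : 0 ≤ γ₁) (hγ₂ : 0 ≤ γ₂)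
    -- `(xb, pb)` belongs to the graph of the solution map
    (hgraph : -f xb pb₁ pb₂ ∈ F xb)
    -- (a) `f(xb, pb) = h(xb)`
    (hab : f xb pb₁ pb₂ = h xb)
    -- (b) `h + F` strongly subregular with constant `κ` at `xb` for `0`
    (hsub : StrongSubregularAt (fun x => (fun w => h x + w) '' F x) xb 0 κ)
    -- (c) `f(·, p) - h` Lipschitz with constant `μ` uniformly in `p` at `(xb, pb)`
    (hc : ∃ U ∈ nhds xb, ∃ Q₁ ∈ nhds pb₁, ∃ Q₂ ∈ nhds pb₂,
      ∀ p₁ ∈ Q₁, ∀ p₂ ∈ Q₂, ∀ x ∈ U, ∀ x' ∈ U,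
        ‖(f x p₁ p₂ - h x) - (f x' p₁ p₂ - h x')‖ ≤ μ * ‖x - x'‖)
    -- (d) `f(x, ·, p₂)` and `f(x, p₁, ·)` Lipschitz with constants `γ₁`, `γ₂`
    (hd₁ : ∃ U ∈ nhds xb, ∃ Q₁ ∈ nhds pb₁, ∃ Q₂ ∈ nhds pb₂,
      ∀ x ∈ U, ∀ p₂ ∈ Q₂, ∀ p₁ ∈ Q₁, ∀ p₁' ∈ Q₁,
        ‖f x p₁ p₂ - f x p₁' p₂‖ ≤ γ₁ * ‖p₁ - p₁'‖)
    (hd₂ : ∃ U ∈ nhds xb, ∃ Q₁ ∈ nhds pb₁, ∃ Q₂ ∈ nhds pb₂,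
      ∀ x ∈ U, ∀ p₁ ∈ Q₁, ∀ p₂ ∈ Q₂, ∀ p₂' ∈ Q₂,
        ‖f x p₁ p₂ - f x p₁ p₂'‖ ≤ γ₂ * ‖p₂ - p₂'‖)
    (hsmall : κ * μ < 1) :
    -- `S` has the isolated calmness property at `pb` for `xb` with the stated bound
    ∃ U ∈ nhds xb, ∃ Q₁ ∈ nhds pb₁, ∃ Q₂ ∈ nhds pb₂,
      ({x : X | -f x pb₁ pb₂ ∈ F x} ∩ U = {xb}) ∧
      ∀ p₁ ∈ Q₁, ∀ p₂ ∈ Q₂, ∀ x ∈ U, -f x p₁ p₂ ∈ F x →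
        ‖x - xb‖ ≤ (κ / (1 - κ * μ)) * γ₁ * ‖p₁ - pb₁‖
          + (κ / (1 - κ * μ)) * γ₂ * ‖p₂ - pb₂‖ := by
  obtain ⟨U₀, hU₀, V, hV, huniq, hest⟩ := hsub
  obtain ⟨Uc, hUc, Q₁c, hQ₁c, Q₂c, hQ₂c, hlipc⟩ := hc
  obtain ⟨U₁, hU₁, Q₁₁, hQ₁₁, Q₂₁, hQ₂₁, hlip1⟩ := hd₁
  obtain ⟨U₂, hU₂, Q₁₂, hQ₁₂, Q₂₂, hQ₂₂, hlip2⟩ := hd₂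
  obtain ⟨ε, hε, hball⟩ := Metric.mem_nhds_iff.mp hU₀
  have hcpos : (0:ℝ) < 1 + μ + γ₁ + γ₂ := by linarith
  set δ : ℝ := ε / (1 + μ + γ₁ + γ₂) with hδdef
  have hδpos : 0 < δ := div_pos hε hcpos
  have hδε : (1 + μ + γ₁ + γ₂) * δ = ε := by
    rw [hδdef]; field_simp
  have hxbV : xb ∈ V := by
    have h0 : xb ∈ ({x : X | (0:Y) ∈ (fun w => h x + w) '' F x} ∩ V) := by
      rw [huniq]; exact rfl
    exact h0.2
  refine ⟨Metric.ball xb δ ∩ V ∩ Uc ∩ U₁ ∩ U₂, ?_,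
    Metric.ball pb₁ δ ∩ Q₁c ∩ Q₁₁ ∩ Q₁₂, ?_,
    Metric.ball pb₂ δ ∩ Q₂c ∩ Q₂₁ ∩ Q₂₂, ?_, ?_, ?_⟩
  · exact Filter.inter_mem (Filter.inter_mem (Filter.inter_mem
      (Filter.inter_mem (Metric.ball_mem_nhds _ hδpos) hV) hUc) hU₁) hU₂
  · exact Filter.inter_mem (Filter.inter_mem
      (Filter.inter_mem (Metric.ball_mem_nhds _ hδpos) hQ₁c) hQ₁₁) hQ₁₂
  · exact Filter.inter_mem (Filter.inter_mem
      (Filter.inter_mem (Metric.ball_mem_nhds _ hδpos) hQ₂c) hQ₂₁) hQ₂₂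
  all_goals {
    have key : ∀ p₁ ∈ Metric.ball pb₁ δ ∩ Q₁c ∩ Q₁₁ ∩ Q₁₂,
        ∀ p₂ ∈ Metric.ball pb₂ δ ∩ Q₂c ∩ Q₂₁ ∩ Q₂₂,
        ∀ x ∈ Metric.ball xb δ ∩ V ∩ Uc ∩ U₁ ∩ U₂, -f x p₁ p₂ ∈ F x →
        ‖x - xb‖ ≤ κ * μ * ‖x - xb‖ + κ * γ₁ * ‖p₁ - pb₁‖ + κ * γ₂ * ‖p₂ - pb₂‖ := by
      intro p₁ hp₁ p₂ hp₂ x hx hFx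
      obtain ⟨⟨⟨hp₁b, hp₁c⟩, hp₁1⟩, hp₁2⟩ := hp₁
      obtain ⟨⟨⟨hp₂b, hp₂c⟩, hp₂1⟩, hp₂2⟩ := hp₂
      obtain ⟨⟨⟨⟨hxb, hxV⟩, hxc⟩, hx1⟩, hx2⟩ := hx
      have hxδ : ‖x - xb‖ < δ := by rw [← dist_eq_norm]; exact hxb
      have hp₁δ : ‖p₁ - pb₁‖ < δ := by rw [← dist_eq_norm]; exact hp₁b
      have hp₂δ : ‖p₂ - pb₂‖ < δ := by rw [← dist_eq_norm]; exact hp₂b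
      have hxbc : xb ∈ Uc := mem_of_mem_nhds hUc
      have hxb1 : xb ∈ U₁ := mem_of_mem_nhds hU₁
      have hxb2 : xb ∈ U₂ := mem_of_mem_nhds hU₂
      have hpb₁c : pb₁ ∈ Q₁c := mem_of_mem_nhds hQ₁c
      have hpb₁1 : pb₁ ∈ Q₁₁ := mem_of_mem_nhds hQ₁₁
      have hpb₁2 : pb₁ ∈ Q₁₂ := mem_of_mem_nhds hQ₁₂
      have hpb₂c : pb₂ ∈ Q₂c := mem_of_mem_nhds hQ₂c
      have hpb₂1 : pb₂ ∈ Q₂₁ := mem_of_mem_nhds hQ₂₁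
      have hpb₂2 : pb₂ ∈ Q₂₂ := mem_of_mem_nhds hQ₂₂
      set y : Y := h x - f x p₁ p₂ with hy
      have e : y = ((f xb p₁ p₂ - h xb) - (f x p₁ p₂ - h x))
          + (f xb pb₁ p₂ - f xb p₁ p₂) + (f xb pb₁ pb₂ - f xb pb₁ p₂) := by
        rw [hy, hab]; abel
      have hA : ‖(f xb p₁ p₂ - h xb) - (f x p₁ p₂ - h x)‖ ≤ μ * ‖x - xb‖ := by
        have h' := hlipc p₁ hp₁c p₂ hp₂c x hxc xb hxbc
        rwa [norm_sub_rev (f x p₁ p₂ - h x)] at h'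
      have hB : ‖f xb pb₁ p₂ - f xb p₁ p₂‖ ≤ γ₁ * ‖p₁ - pb₁‖ := by
        have := hlip1 xb hxb1 p₂ hp₂1 pb₁ hpb₁1 p₁ hp₁1
        rwa [norm_sub_rev pb₁ p₁] at this
      have hC : ‖f xb pb₁ pb₂ - f xb pb₁ p₂‖ ≤ γ₂ * ‖p₂ - pb₂‖ := by
        have := hlip2 xb hxb2 pb₁ hpb₁2 pb₂ hpb₂2 p₂ hp₂2
        rwa [norm_sub_rev pb₂ p₂] at this
      have hynorm : ‖y‖ ≤ μ * ‖x - xb‖ + γ₁ * ‖p₁ - pb₁‖ + γ₂ * ‖p₂ - pb₂‖ := by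
        calc ‖y‖ ≤ ‖((f xb p₁ p₂ - h xb) - (f x p₁ p₂ - h x))
              + (f xb pb₁ p₂ - f xb p₁ p₂)‖ + ‖f xb pb₁ pb₂ - f xb pb₁ p₂‖ := by
              rw [e]; exact norm_add_le _ _
          _ ≤ ‖(f xb p₁ p₂ - h xb) - (f x p₁ p₂ - h x)‖
              + ‖f xb pb₁ p₂ - f xb p₁ p₂‖ + ‖f xb pb₁ pb₂ - f xb pb₁ p₂‖ := by
              gcongr; exact norm_add_le _ _
          _ ≤ _ := by linarith
      have hyU₀ : y ∈ U₀ := by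
        apply hball
        rw [Metric.mem_ball, dist_zero_right]
        have h1 : μ * ‖x - xb‖ ≤ μ * δ := mul_le_mul_of_nonneg_left hxδ.le hμ
        have h2 : γ₁ * ‖p₁ - pb₁‖ ≤ γ₁ * δ := mul_le_mul_of_nonneg_left hp₁δ.le hγ₁
        have h3 : γ₂ * ‖p₂ - pb₂‖ ≤ γ₂ * δ := mul_le_mul_of_nonneg_left hp₂δ.le hγ₂
        linarith
      have hmem : x ∈ {x : X | y ∈ (fun w => h x + w) '' F x} ∩ V := by
        refine ⟨⟨-f x p₁ p₂, hFx, ?_⟩, hxV⟩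
        rw [hy]; abel
      have hE := hest y hyU₀ x hmem
      rw [sub_zero] at hE
      have := mul_le_mul_of_nonneg_left hynorm hκ.le
      nlinarith
    clear hest huniq hlipc hlip1 hlip2
    try {
      -- uniqueness goal
      ext x
      simp only [Set.mem_inter_iff, Set.mem_singleton_iff, Set.mem_setOf_eq]
      constructor
      · rintro ⟨hS, hU⟩
        have hpb₁mem : pb₁ ∈ Metric.ball pb₁ δ ∩ Q₁c ∩ Q₁₁ ∩ Q₁₂ :=
          ⟨⟨⟨Metric.mem_ball_self hδpos, mem_of_mem_nhds hQ₁c⟩,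
            mem_of_mem_nhds hQ₁₁⟩, mem_of_mem_nhds hQ₁₂⟩
        have hpb₂mem : pb₂ ∈ Metric.ball pb₂ δ ∩ Q₂c ∩ Q₂₁ ∩ Q₂₂ :=
          ⟨⟨⟨Metric.mem_ball_self hδpos, mem_of_mem_nhds hQ₂c⟩,
            mem_of_mem_nhds hQ₂₁⟩, mem_of_mem_nhds hQ₂₂⟩
        have hk := key pb₁ hpb₁mem pb₂ hpb₂mem x hU hS
        simp only [sub_self, norm_zero, mul_zero, add_zero] at hk
        have hz : ‖x - xb‖ = 0 := by nlinarith [norm_nonneg (x - xb)]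
        have := norm_eq_zero.mp hz
        exact sub_eq_zero.mp this
      · rintro rfl
        exact ⟨hgraph, ⟨⟨⟨⟨Metric.mem_ball_self hδpos, hxbV⟩, mem_of_mem_nhds hUc⟩,
          mem_of_mem_nhds hU₁⟩, mem_of_mem_nhds hU₂⟩⟩ }
    try {
      -- estimate goal
      intro p₁ hp₁ p₂ hp₂ x hx hFx
      have hk := key p₁ hp₁ p₂ hp₂ x hx hFx
      have h1 : (0:ℝ) < 1 - κ * μ := by linarith
      rw [div_mul_eq_mul_div, div_mul_eq_mul_div, div_mul_eq_mul_div,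
        div_mul_eq_mul_div, ← add_div, le_div_iff₀ h1]
      nlinarith } }
end

section
/- (Implicit function theorem for generalized equations with two parameters, strong regularity version.) Under the assumptions of the previous theorem but with h + F strongly regular (rather than subregular) with constant κ at x̄ for 0, the solution map S of 0 ∈ f(x, p₁, p₂) + F(x) has a single-valued localization s : P₁ × P₂ → X at p̄ for x̄, and s is Lipschitz with partial Lipschitz constants bounded by ωγ₁ in p₁ and ωγ₂ in p₂, where ω = κ/(1 − κμ), γ₁, γ₂ are the uniform partial Lipschitz constants of f in p₁, p₂; i.e., ‖s(p₁,p₂) − s(p₁',p₂')‖ ≤ ωγ₁‖p₁ − p₁'‖ + ωγ₂‖p₂ − p₂'‖ for (p₁,p₂), (p₁',p₂') near p̄. -/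
open Filter

set_option maxHeartbeats 2000000 in
theorem implicit_function_two_parameters_strong_regularity
    {X Y P₁ P₂ : Type*}
    [NormedAddCommGroup X] [NormedSpace ℝ X] [CompleteSpace X]
    [NormedAddCommGroup Y] [NormedSpace ℝ Y] [CompleteSpace Y]
    [NormedAddCommGroup P₁] [NormedSpace ℝ P₁] [CompleteSpace P₁]
    [NormedAddCommGroup P₂] [NormedSpace ℝ P₂] [CompleteSpace P₂]
    (f : X → P₁ → P₂ → Y) (F : X → Set Y) (h : X → Y)
    (xb : X) (pb₁ : P₁) (pb₂ : P₂) (κ μ γ₁ γ₂ : ℝ)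
    (hκ : 0 < κ) (hμ : 0 ≤ μ) (hγ₁ : 0 ≤ γ₁) (hγ₂ : 0 ≤ γ₂)
    -- `(xb, pb)` belongs to the graph of the solution map
    (hgraph : -f xb pb₁ pb₂ ∈ F xb)
    -- (a) `f(xb, pb) = h(xb)`
    (hab : f xb pb₁ pb₂ = h xb)
    -- (b) `h + F` strongly regular with constant `κ` at `xb` for `0`
    (hregular : StrongRegularAt (fun x => (fun w => h x + w) '' F x) xb 0 κ)
    -- (c) `f(·, p) - h` Lipschitz with constant `μ` uniformly in `p` at `(xb, pb)`
    (hc : ∃ U ∈ nhds xb, ∃ Q₁ ∈ nhds pb₁, ∃ Q₂ ∈ nhds pb₂,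
      ∀ p₁ ∈ Q₁, ∀ p₂ ∈ Q₂, ∀ x ∈ U, ∀ x' ∈ U,
        ‖(f x p₁ p₂ - h x) - (f x' p₁ p₂ - h x')‖ ≤ μ * ‖x - x'‖)
    -- (d) `f(x, ·, p₂)` and `f(x, p₁, ·)` Lipschitz with constants `γ₁`, `γ₂`
    (hd₁ : ∃ U ∈ nhds xb, ∃ Q₁ ∈ nhds pb₁, ∃ Q₂ ∈ nhds pb₂,
      ∀ x ∈ U, ∀ p₂ ∈ Q₂, ∀ p₁ ∈ Q₁, ∀ p₁' ∈ Q₁,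
        ‖f x p₁ p₂ - f x p₁' p₂‖ ≤ γ₁ * ‖p₁ - p₁'‖)
    (hd₂ : ∃ U ∈ nhds xb, ∃ Q₁ ∈ nhds pb₁, ∃ Q₂ ∈ nhds pb₂,
      ∀ x ∈ U, ∀ p₁ ∈ Q₁, ∀ p₂ ∈ Q₂, ∀ p₂' ∈ Q₂,
        ‖f x p₁ p₂ - f x p₁ p₂'‖ ≤ γ₂ * ‖p₂ - p₂'‖)
    (hsmall : κ * μ < 1) :
    -- `S` has a Lipschitz single-valued localization `s` at `pb` for `xb`
    ∃ s : P₁ → P₂ → X, ∃ U ∈ nhds xb, ∃ Q₁ ∈ nhds pb₁, ∃ Q₂ ∈ nhds pb₂,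
      s pb₁ pb₂ = xb ∧
      (∀ p₁ ∈ Q₁, ∀ p₂ ∈ Q₂, {x : X | -f x p₁ p₂ ∈ F x} ∩ U = {s p₁ p₂}) ∧
      (∀ p₁ ∈ Q₁, ∀ p₁' ∈ Q₁, ∀ p₂ ∈ Q₂, ∀ p₂' ∈ Q₂,
        ‖s p₁ p₂ - s p₁' p₂'‖ ≤ (κ / (1 - κ * μ)) * γ₁ * ‖p₁ - p₁'‖
          + (κ / (1 - κ * μ)) * γ₂ * ‖p₂ - p₂'‖) := by
  classical
  obtain ⟨σf, U₀, hU₀, V₀, hV₀, hloc, hlip⟩ := hregular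
  obtain ⟨Uc, hUc, Qc₁, hQc₁, Qc₂, hQc₂, hcl⟩ := hc
  obtain ⟨Ud1, hUd1, Qd1₁, hQd1₁, Qd1₂, hQd1₂, hd1l⟩ := hd₁
  obtain ⟨Ud2, hUd2, Qd2₁, hQd2₁, Qd2₂, hQd2₂, hd2l⟩ := hd₂
  obtain ⟨εU, hεU, hεUsub⟩ := Metric.mem_nhds_iff.1 hU₀
  obtain ⟨εV, hεV, hεVsub⟩ := Metric.mem_nhds_iff.1 hV₀
  obtain ⟨εc, hεc, hεcsub⟩ := Metric.mem_nhds_iff.1 hUc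
  obtain ⟨εd1, hεd1, hεd1sub⟩ := Metric.mem_nhds_iff.1 hUd1
  obtain ⟨εd2, hεd2, hεd2sub⟩ := Metric.mem_nhds_iff.1 hUd2
  obtain ⟨ρc1, hρc1, hρc1sub⟩ := Metric.mem_nhds_iff.1 hQc₁
  obtain ⟨ρc2, hρc2, hρc2sub⟩ := Metric.mem_nhds_iff.1 hQc₂
  obtain ⟨ρd11, hρd11, hρd11sub⟩ := Metric.mem_nhds_iff.1 hQd1₁
  obtain ⟨ρd12, hρd12, hρd12sub⟩ := Metric.mem_nhds_iff.1 hQd1₂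
  obtain ⟨ρd21, hρd21, hρd21sub⟩ := Metric.mem_nhds_iff.1 hQd2₁
  obtain ⟨ρd22, hρd22, hρd22sub⟩ := Metric.mem_nhds_iff.1 hQd2₂
  have h1m : (0:ℝ) < 1 - κ * μ := by linarith
  -- radii
  set rx : ℝ := min (min εV εc) (min εd1 εd2) with hrx_def
  have hrx : 0 < rx := by positivity
  set r : ℝ := min (rx / 2) (εU / (4 * (μ + 1))) with hr_def
  have hrpos : 0 < r := by positivity
  set b : ℝ := εU / 2 with hb_def
  have hbpos : 0 < b := by positivity
  have hr_lt_rx : r < rx := lt_of_le_of_lt (min_le_left _ _) (by linarith)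
  have hcb_rx : Metric.closedBall xb r ⊆ Metric.ball xb rx :=
    Metric.closedBall_subset_ball hr_lt_rx
  have hcbV : Metric.closedBall xb r ⊆ V₀ :=
    hcb_rx.trans ((Metric.ball_subset_ball ((min_le_left _ _).trans (min_le_left _ _))).trans hεVsub)
  have hcbUc : Metric.closedBall xb r ⊆ Uc :=
    hcb_rx.trans ((Metric.ball_subset_ball ((min_le_left _ _).trans (min_le_right _ _))).trans hεcsub)
  have hcbUd1 : Metric.closedBall xb r ⊆ Ud1 :=
    hcb_rx.trans ((Metric.ball_subset_ball ((min_le_right _ _).trans (min_le_left _ _))).trans hεd1sub)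
  have hcbUd2 : Metric.closedBall xb r ⊆ Ud2 :=
    hcb_rx.trans ((Metric.ball_subset_ball ((min_le_right _ _).trans (min_le_right _ _))).trans hεd2sub)
  have hbU : Metric.closedBall (0:Y) b ⊆ U₀ :=
    (Metric.closedBall_subset_ball (by rw [hb_def]; linarith)).trans hεUsub
  have hμr : μ * r ≤ b / 2 := by
    have h1 : μ * r ≤ (μ + 1) * r := by
      have : (μ + 1) * r = μ * r + r := by ring
      linarith
    have h2 : (μ + 1) * r ≤ (μ + 1) * (εU / (4 * (μ + 1))) :=
      mul_le_mul_of_nonneg_left (min_le_right _ _) (by linarith)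
    have h3 : (μ + 1) * (εU / (4 * (μ + 1))) = εU / 4 := by
      field_simp
    rw [hb_def]; linarith
  -- parameter radius
  set c : ℝ := min ((1 - κ * μ) * r / κ) (b / 2) with hc_def
  have hcpos : 0 < c := lt_min (by positivity) (by positivity)
  set ρ : ℝ := min (min (min ρc1 ρc2) (min ρd11 ρd12)) (min ρd21 ρd22) with hρ_def
  have hρpos : 0 < ρ := by positivity
  set δ : ℝ := min (ρ / 2) (c / (γ₁ + γ₂ + 1)) with hδ_def
  have hδpos : 0 < δ := by positivity
  have hδρ : δ < ρ := lt_of_le_of_lt (min_le_left _ _) (by linarith)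
  have hB1c : Metric.ball pb₁ δ ⊆ Qc₁ :=
    (Metric.ball_subset_ball (hδρ.le.trans ((min_le_left _ _).trans ((min_le_left _ _).trans (min_le_left _ _))))).trans hρc1sub
  have hB2c : Metric.ball pb₂ δ ⊆ Qc₂ :=
    (Metric.ball_subset_ball (hδρ.le.trans ((min_le_left _ _).trans ((min_le_left _ _).trans (min_le_right _ _))))).trans hρc2sub
  have hB1d1 : Metric.ball pb₁ δ ⊆ Qd1₁ :=
    (Metric.ball_subset_ball (hδρ.le.trans ((min_le_left _ _).trans ((min_le_right _ _).trans (min_le_left _ _))))).trans hρd11sub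
  have hB2d1 : Metric.ball pb₂ δ ⊆ Qd1₂ :=
    (Metric.ball_subset_ball (hδρ.le.trans ((min_le_left _ _).trans ((min_le_right _ _).trans (min_le_right _ _))))).trans hρd12sub
  have hB1d2 : Metric.ball pb₁ δ ⊆ Qd2₁ :=
    (Metric.ball_subset_ball (hδρ.le.trans ((min_le_right _ _).trans (min_le_left _ _)))).trans hρd21sub
  have hB2d2 : Metric.ball pb₂ δ ⊆ Qd2₂ :=
    (Metric.ball_subset_ball (hδρ.le.trans ((min_le_right _ _).trans (min_le_right _ _)))).trans hρd22sub
  have hδc : (γ₁ + γ₂) * δ ≤ c := by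
    have h1 : (γ₁ + γ₂) * δ ≤ (γ₁ + γ₂ + 1) * δ := by
      have : (γ₁ + γ₂ + 1) * δ = (γ₁ + γ₂) * δ + δ := by ring
      linarith
    have h2 : (γ₁ + γ₂ + 1) * δ ≤ (γ₁ + γ₂ + 1) * (c / (γ₁ + γ₂ + 1)) :=
      mul_le_mul_of_nonneg_left (min_le_right _ _) (by linarith)
    have h3 : (γ₁ + γ₂ + 1) * (c / (γ₁ + γ₂ + 1)) = c := by
      field_simp
    linarith
  -- basic membership facts
  have hxbV₀ : xb ∈ V₀ := mem_of_mem_nhds hV₀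
  have h0U₀ : (0:Y) ∈ U₀ := mem_of_mem_nhds hU₀
  have hxbUd1 : xb ∈ Ud1 := mem_of_mem_nhds hUd1
  have hxbUd2 : xb ∈ Ud2 := mem_of_mem_nhds hUd2
  have hpb1Qd1 : pb₁ ∈ Qd1₁ := mem_of_mem_nhds hQd1₁
  have hpb2Qd1 : pb₂ ∈ Qd1₂ := mem_of_mem_nhds hQd1₂
  have hpb1Qd2 : pb₁ ∈ Qd2₁ := mem_of_mem_nhds hQd2₁
  have hpb2Qd2 : pb₂ ∈ Qd2₂ := mem_of_mem_nhds hQd2₂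
  -- σf 0 = xb
  have hσ0 : σf 0 = xb := by
    have hmem : xb ∈ {z : X | (0:Y) ∈ (fun w => h z + w) '' F z} ∩ V₀ := by
      refine ⟨⟨-f xb pb₁ pb₂, hgraph, ?_⟩, hxbV₀⟩
      simp [hab]
    rw [hloc 0 h0U₀] at hmem
    exact hmem.symm
  -- norm bound on g(x, p) = h x - f x p₁ p₂
  have hgb : ∀ p₁ ∈ Metric.ball pb₁ δ, ∀ p₂ ∈ Metric.ball pb₂ δ,
      ∀ x ∈ Metric.closedBall xb r, ‖h x - f x p₁ p₂‖ ≤ μ * r + (γ₁ + γ₂) * δ := by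
    intro p₁ hp₁ p₂ hp₂ x hx
    have hA : ‖(h x - f x p₁ p₂) - (h xb - f xb p₁ p₂)‖ ≤ μ * ‖x - xb‖ := by
      have := hcl p₁ (hB1c hp₁) p₂ (hB2c hp₂) x (hcbUc hx) xb (hcbUc (Metric.mem_closedBall_self hrpos.le))
      calc ‖(h x - f x p₁ p₂) - (h xb - f xb p₁ p₂)‖
          = ‖(f x p₁ p₂ - h x) - (f xb p₁ p₂ - h xb)‖ := by rw [← norm_neg]; congr 1; abel
        _ ≤ μ * ‖x - xb‖ := this
    have hB : ‖f xb pb₁ pb₂ - f xb p₁ pb₂‖ ≤ γ₁ * ‖pb₁ - p₁‖ :=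
      hd1l xb hxbUd1 pb₂ hpb2Qd1 pb₁ hpb1Qd1 p₁ (hB1d1 hp₁)
    have hC : ‖f xb p₁ pb₂ - f xb p₁ p₂‖ ≤ γ₂ * ‖pb₂ - p₂‖ :=
      hd2l xb hxbUd2 p₁ (hB1d2 hp₁) pb₂ hpb2Qd2 p₂ (hB2d2 hp₂)
    have hxr : ‖x - xb‖ ≤ r := by
      rw [← dist_eq_norm]; exact Metric.mem_closedBall.1 hx
    have hp1d : ‖pb₁ - p₁‖ ≤ δ := by
      rw [← dist_eq_norm, dist_comm]; exact (Metric.mem_ball.1 hp₁).le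
    have hp2d : ‖pb₂ - p₂‖ ≤ δ := by
      rw [← dist_eq_norm, dist_comm]; exact (Metric.mem_ball.1 hp₂).le
    calc ‖h x - f x p₁ p₂‖
        = ‖((h x - f x p₁ p₂) - (h xb - f xb p₁ p₂)) + ((f xb pb₁ pb₂ - f xb p₁ pb₂) + (f xb p₁ pb₂ - f xb p₁ p₂))‖ := by
          congr 1; rw [← hab]; abel
      _ ≤ ‖(h x - f x p₁ p₂) - (h xb - f xb p₁ p₂)‖ + (‖f xb pb₁ pb₂ - f xb p₁ pb₂‖ + ‖f xb p₁ pb₂ - f xb p₁ p₂‖) := by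
          refine (norm_add_le _ _).trans (by gcongr; exact norm_add_le _ _)
      _ ≤ μ * ‖x - xb‖ + (γ₁ * ‖pb₁ - p₁‖ + γ₂ * ‖pb₂ - p₂‖) := by gcongr
      _ ≤ μ * r + (γ₁ * δ + γ₂ * δ) := by gcongr
      _ = μ * r + (γ₁ + γ₂) * δ := by ring
  have hgbound : μ * r + (γ₁ + γ₂) * δ ≤ b := by
    have : c ≤ b / 2 := min_le_right _ _
    linarith
  have hgU₀ : ∀ p₁ ∈ Metric.ball pb₁ δ, ∀ p₂ ∈ Metric.ball pb₂ δ,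
      ∀ x ∈ Metric.closedBall xb r, h x - f x p₁ p₂ ∈ U₀ := by
    intro p₁ hp₁ p₂ hp₂ x hx
    apply hbU
    rw [Metric.mem_closedBall, dist_zero_right]
    exact (hgb p₁ hp₁ p₂ hp₂ x hx).trans hgbound
  -- the map σf ∘ g sends the closed ball into itself
  have hσmap : ∀ p₁ ∈ Metric.ball pb₁ δ, ∀ p₂ ∈ Metric.ball pb₂ δ,
      ∀ x ∈ Metric.closedBall xb r, σf (h x - f x p₁ p₂) ∈ Metric.closedBall xb r := by
    intro p₁ hp₁ p₂ hp₂ x hx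
    rw [Metric.mem_closedBall, dist_eq_norm]
    have h1 : ‖σf (h x - f x p₁ p₂) - xb‖ ≤ κ * ‖h x - f x p₁ p₂‖ := by
      have := hlip _ (hgU₀ p₁ hp₁ p₂ hp₂ x hx) 0 h0U₀
      rwa [hσ0, sub_zero] at this
    have h2 : κ * ‖h x - f x p₁ p₂‖ ≤ κ * (μ * r + (γ₁ + γ₂) * δ) :=
      mul_le_mul_of_nonneg_left (hgb p₁ hp₁ p₂ hp₂ x hx) hκ.le
    have h3 : κ * ((γ₁ + γ₂) * δ) ≤ κ * c := mul_le_mul_of_nonneg_left hδc hκ.le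
    have h4 : κ * c ≤ κ * ((1 - κ * μ) * r / κ) := mul_le_mul_of_nonneg_left (min_le_left _ _) hκ.le
    have h5 : κ * ((1 - κ * μ) * r / κ) = (1 - κ * μ) * r := by
      field_simp
    have e3 : κ * (μ * r + (γ₁ + γ₂) * δ) = κ * (μ * r) + κ * ((γ₁ + γ₂) * δ) := by ring
    have e4 : κ * (μ * r) = κ * μ * r := by ring
    have e5 : (1 - κ * μ) * r = r - κ * μ * r := by ring
    linarith
  -- contraction estimate
  have hσcontr : ∀ p₁ ∈ Metric.ball pb₁ δ, ∀ p₂ ∈ Metric.ball pb₂ δ,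
      ∀ x ∈ Metric.closedBall xb r, ∀ x' ∈ Metric.closedBall xb r,
      ‖σf (h x - f x p₁ p₂) - σf (h x' - f x' p₁ p₂)‖ ≤ κ * μ * ‖x - x'‖ := by
    intro p₁ hp₁ p₂ hp₂ x hx x' hx'
    have h1 := hlip _ (hgU₀ p₁ hp₁ p₂ hp₂ x hx) _ (hgU₀ p₁ hp₁ p₂ hp₂ x' hx')
    have h2 : ‖(h x - f x p₁ p₂) - (h x' - f x' p₁ p₂)‖ ≤ μ * ‖x - x'‖ := by
      have := hcl p₁ (hB1c hp₁) p₂ (hB2c hp₂) x (hcbUc hx) x' (hcbUc hx')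
      calc ‖(h x - f x p₁ p₂) - (h x' - f x' p₁ p₂)‖
          = ‖(f x p₁ p₂ - h x) - (f x' p₁ p₂ - h x')‖ := by rw [← norm_neg]; congr 1; abel
        _ ≤ μ * ‖x - x'‖ := this
    calc ‖σf (h x - f x p₁ p₂) - σf (h x' - f x' p₁ p₂)‖
        ≤ κ * ‖(h x - f x p₁ p₂) - (h x' - f x' p₁ p₂)‖ := h1
      _ ≤ κ * (μ * ‖x - x'‖) := mul_le_mul_of_nonneg_left h2 hκ.le
      _ = κ * μ * ‖x - x'‖ := by ring
  -- solutions are exactly fixed points of σf ∘ g; uniqueness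
  have hchar : ∀ p₁ ∈ Metric.ball pb₁ δ, ∀ p₂ ∈ Metric.ball pb₂ δ,
      ∀ x ∈ Metric.closedBall xb r, -f x p₁ p₂ ∈ F x → x = σf (h x - f x p₁ p₂) := by
    intro p₁ hp₁ p₂ hp₂ x hx hxF
    have hmem : x ∈ {z : X | h x - f x p₁ p₂ ∈ (fun w => h z + w) '' F z} ∩ V₀ := by
      refine ⟨⟨-f x p₁ p₂, hxF, ?_⟩, hcbV hx⟩
      simp [sub_eq_add_neg]
    rw [hloc _ (hgU₀ p₁ hp₁ p₂ hp₂ x hx)] at hmem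
    exact hmem
  have huniq : ∀ p₁ ∈ Metric.ball pb₁ δ, ∀ p₂ ∈ Metric.ball pb₂ δ,
      ∀ x ∈ Metric.closedBall xb r, -f x p₁ p₂ ∈ F x →
      ∀ x' ∈ Metric.closedBall xb r, -f x' p₁ p₂ ∈ F x' → x = x' := by
    intro p₁ hp₁ p₂ hp₂ x hx hxF x' hx' hxF'
    have e1 := hchar p₁ hp₁ p₂ hp₂ x hx hxF
    have e2 := hchar p₁ hp₁ p₂ hp₂ x' hx' hxF'
    have key : ‖x - x'‖ ≤ κ * μ * ‖x - x'‖ := by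
      calc ‖x - x'‖ = ‖σf (h x - f x p₁ p₂) - σf (h x' - f x' p₁ p₂)‖ := by rw [← e1, ← e2]
        _ ≤ κ * μ * ‖x - x'‖ := hσcontr p₁ hp₁ p₂ hp₂ x hx x' hx'
    have hle : ‖x - x'‖ ≤ 0 := by nlinarith [norm_nonneg (x - x')]
    exact sub_eq_zero.1 (norm_le_zero_iff.1 hle)
  -- existence via Banach fixed point theorem
  have key : ∀ p₁, p₁ ∈ Metric.ball pb₁ δ → ∀ p₂, p₂ ∈ Metric.ball pb₂ δ →
      ∃ x, x ∈ Metric.closedBall xb r ∧ -f x p₁ p₂ ∈ F x := by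
    intro p₁ hp₁ p₂ hp₂
    haveI : Nonempty (Metric.closedBall xb r) := ⟨⟨xb, Metric.mem_closedBall_self hrpos.le⟩⟩
    haveI : CompleteSpace (Metric.closedBall xb r) :=
      (Metric.isClosed_closedBall).completeSpace_coe
    set Φ : Metric.closedBall xb r → Metric.closedBall xb r :=
      fun x => ⟨σf (h x.1 - f x.1 p₁ p₂), hσmap p₁ hp₁ p₂ hp₂ x.1 x.2⟩ with hΦ_def
    have hΦlip : LipschitzWith (Real.toNNReal (κ * μ)) Φ := by
      apply LipschitzWith.of_dist_le_mul
      intro x y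
      rw [Subtype.dist_eq, Subtype.dist_eq, dist_eq_norm, dist_eq_norm,
        Real.coe_toNNReal _ (by positivity : (0:ℝ) ≤ κ * μ)]
      exact hσcontr p₁ hp₁ p₂ hp₂ x.1 x.2 y.1 y.2
    have hcon : ContractingWith (Real.toNNReal (κ * μ)) Φ :=
      ⟨by simp only [← Real.toNNReal_one]; exact (Real.toNNReal_lt_toNNReal_iff_of_nonneg (by positivity)).2 (by simpa using hsmall), hΦlip⟩
    obtain ⟨xf, hfix⟩ : ∃ z, Φ z = z := ⟨_, hcon.fixedPoint_isFixedPt⟩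
    have hfix' : σf (h xf.1 - f xf.1 p₁ p₂) = xf.1 := congrArg Subtype.val hfix
    have hmem : (xf.1 : X) ∈ {z : X | h xf.1 - f xf.1 p₁ p₂ ∈ (fun w => h z + w) '' F z} ∩ V₀ := by
      rw [hloc _ (hgU₀ p₁ hp₁ p₂ hp₂ xf.1 xf.2)]
      exact hfix'.symm
    obtain ⟨⟨w, hwF, hw⟩, -⟩ := hmem
    have hwv : w = -f xf.1 p₁ p₂ := by
      have hw' : h xf.1 + w = h xf.1 - f xf.1 p₁ p₂ := hw
      have : h xf.1 + w = h xf.1 + -f xf.1 p₁ p₂ := by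
        rw [hw']; abel
      exact add_left_cancel this
    exact ⟨xf.1, xf.2, hwv ▸ hwF⟩
  choose! s hs using key
  refine ⟨s, Metric.closedBall xb r, Metric.closedBall_mem_nhds _ hrpos,
    Metric.ball pb₁ δ, Metric.ball_mem_nhds _ hδpos,
    Metric.ball pb₂ δ, Metric.ball_mem_nhds _ hδpos, ?_, ?_, ?_⟩
  · -- s pb₁ pb₂ = xb
    obtain ⟨hmem, hF⟩ := hs pb₁ (Metric.mem_ball_self hδpos) pb₂ (Metric.mem_ball_self hδpos)
    exact huniq pb₁ (Metric.mem_ball_self hδpos) pb₂ (Metric.mem_ball_self hδpos)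
      _ hmem hF xb (Metric.mem_closedBall_self hrpos.le) hgraph
  · -- localization
    intro p₁ hp₁ p₂ hp₂
    obtain ⟨hmem, hF⟩ := hs p₁ hp₁ p₂ hp₂
    ext x
    simp only [Set.mem_inter_iff, Set.mem_setOf_eq, Set.mem_singleton_iff]
    constructor
    · rintro ⟨hxF, hxU⟩
      exact huniq p₁ hp₁ p₂ hp₂ x hxU hxF _ hmem hF
    · rintro rfl
      exact ⟨hF, hmem⟩
  · -- Lipschitz estimate
    intro p₁ hp₁ p₁' hp₁' p₂ hp₂ p₂' hp₂'
    obtain ⟨hmem, hF⟩ := hs p₁ hp₁ p₂ hp₂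
    obtain ⟨hmem', hF'⟩ := hs p₁' hp₁' p₂' hp₂'
    set x := s p₁ p₂
    set x' := s p₁' p₂'
    have e1 : x = σf (h x - f x p₁ p₂) := hchar p₁ hp₁ p₂ hp₂ x hmem hF
    have e2 : x' = σf (h x' - f x' p₁' p₂') := hchar p₁' hp₁' p₂' hp₂' x' hmem' hF'
    have hσ : ‖σf (h x - f x p₁ p₂) - σf (h x' - f x' p₁' p₂')‖
        ≤ κ * ‖(h x - f x p₁ p₂) - (h x' - f x' p₁' p₂')‖ :=
      hlip _ (hgU₀ p₁ hp₁ p₂ hp₂ x hmem) _ (hgU₀ p₁' hp₁' p₂' hp₂' x' hmem')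
    have hc1 : ‖(h x - f x p₁ p₂) - (h x' - f x' p₁ p₂)‖ ≤ μ * ‖x - x'‖ := by
      have := hcl p₁ (hB1c hp₁) p₂ (hB2c hp₂) x (hcbUc hmem) x' (hcbUc hmem')
      calc ‖(h x - f x p₁ p₂) - (h x' - f x' p₁ p₂)‖
          = ‖(f x p₁ p₂ - h x) - (f x' p₁ p₂ - h x')‖ := by rw [← norm_neg]; congr 1; abel
        _ ≤ μ * ‖x - x'‖ := this
    have hc2 : ‖f x' p₁' p₂' - f x' p₁ p₂'‖ ≤ γ₁ * ‖p₁' - p₁‖ :=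
      hd1l x' (hcbUd1 hmem') p₂' (hB2d1 hp₂') p₁' (hB1d1 hp₁') p₁ (hB1d1 hp₁)
    have hc3 : ‖f x' p₁ p₂' - f x' p₁ p₂‖ ≤ γ₂ * ‖p₂' - p₂‖ :=
      hd2l x' (hcbUd2 hmem') p₁ (hB1d2 hp₁) p₂' (hB2d2 hp₂') p₂ (hB2d2 hp₂)
    have hsum : ‖(h x - f x p₁ p₂) - (h x' - f x' p₁' p₂')‖
        ≤ μ * ‖x - x'‖ + (γ₁ * ‖p₁' - p₁‖ + γ₂ * ‖p₂' - p₂‖) := by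
      calc ‖(h x - f x p₁ p₂) - (h x' - f x' p₁' p₂')‖
          = ‖((h x - f x p₁ p₂) - (h x' - f x' p₁ p₂))
              + ((f x' p₁' p₂' - f x' p₁ p₂') + (f x' p₁ p₂' - f x' p₁ p₂))‖ := by
            congr 1; abel
        _ ≤ ‖(h x - f x p₁ p₂) - (h x' - f x' p₁ p₂)‖
              + (‖f x' p₁' p₂' - f x' p₁ p₂'‖ + ‖f x' p₁ p₂' - f x' p₁ p₂‖) := by
            refine (norm_add_le _ _).trans (by gcongr; exact norm_add_le _ _)
        _ ≤ μ * ‖x - x'‖ + (γ₁ * ‖p₁' - p₁‖ + γ₂ * ‖p₂' - p₂‖) := by gcongr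
    have hkey : ‖x - x'‖ ≤ κ * μ * ‖x - x'‖ + κ * (γ₁ * ‖p₁' - p₁‖ + γ₂ * ‖p₂' - p₂‖) := by
      have h6 : ‖x - x'‖ ≤ κ * (μ * ‖x - x'‖ + (γ₁ * ‖p₁' - p₁‖ + γ₂ * ‖p₂' - p₂‖)) := by
        calc ‖x - x'‖ = ‖σf (h x - f x p₁ p₂) - σf (h x' - f x' p₁' p₂')‖ := by
              rw [← e1, ← e2]
          _ ≤ κ * ‖(h x - f x p₁ p₂) - (h x' - f x' p₁' p₂')‖ := hσ
          _ ≤ κ * (μ * ‖x - x'‖ + (γ₁ * ‖p₁' - p₁‖ + γ₂ * ‖p₂' - p₂‖)) :=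
              mul_le_mul_of_nonneg_left hsum hκ.le
      have h7 : κ * (μ * ‖x - x'‖ + (γ₁ * ‖p₁' - p₁‖ + γ₂ * ‖p₂' - p₂‖))
          = κ * μ * ‖x - x'‖ + κ * (γ₁ * ‖p₁' - p₁‖ + γ₂ * ‖p₂' - p₂‖) := by ring
      linarith
    have hnorm1 : ‖p₁' - p₁‖ = ‖p₁ - p₁'‖ := norm_sub_rev _ _
    have hnorm2 : ‖p₂' - p₂‖ = ‖p₂ - p₂'‖ := norm_sub_rev _ _
    rw [hnorm1, hnorm2] at hkey
    have hrhs : (κ / (1 - κ * μ)) * γ₁ * ‖p₁ - p₁'‖ + (κ / (1 - κ * μ)) * γ₂ * ‖p₂ - p₂'‖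
        = κ * (γ₁ * ‖p₁ - p₁'‖ + γ₂ * ‖p₂ - p₂'‖) / (1 - κ * μ) := by
      field_simp
    rw [hrhs, le_div_iff₀ h1m]
    nlinarith [hkey]
end

section
/- Suppose the KKT mapping of the nonlinear program min_{x∈C} h(x) s.t. g(x) = 0 is strongly regular at an optimal primal-dual pair (x̄, ȳ) for 0. Then there exists ϱ̄ > 0 such that for every penalty parameter ϱ ≥ ϱ̄ and for (x_0, y_0) and disturbance sequence {v_k} sufficiently close to (x̄, ȳ, 0), the (disturbed) augmented Lagrangian iteration—x_{k+1} minimizing the augmented Lagrangian h(x, v_k) + ⟨y_k, g(x, v_k)⟩ + (ϱ/2)‖g(x, v_k)‖² over C locally, followed by y_{k+1} = y_k + ϱ g(x_{k+1}, v_k)—is locally input-to-state stable around (x̄, ȳ): ‖(x_k, y_k) − (x̄, ȳ)‖ ≤ β(‖(x_0, y_0) − (x̄, ȳ)‖, k) + γ(sup_j ‖v_j‖) for some β ∈ 𝒦ℒ, γ ∈ 𝒦_∞. -/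
open Filter RealInnerProductSpace

/-- The normal cone to a (closed convex) set `C` at `x`. -/
def normalCone {X : Type*} [NormedAddCommGroup X] [InnerProductSpace ℝ X]
    (C : Set X) (x : X) : Set X :=
  {w : X | x ∈ C ∧ ∀ c ∈ C, ⟪w, c - x⟫ ≤ 0}

/-- A class-`𝒦∞` comparison function. -/
def ClassKInf (γ : ℝ → ℝ) : Prop :=
  Continuous γ ∧ StrictMonoOn γ (Set.Ici 0) ∧ γ 0 = 0 ∧ Tendsto γ atTop atTop

/-- A (discrete-time) class-`𝒦ℒ` comparison function. -/
def ClassKL (β : ℝ → ℕ → ℝ) : Prop :=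
  (∀ k, Continuous (fun r => β r k) ∧ StrictMonoOn (fun r => β r k) (Set.Ici 0) ∧
    β 0 k = 0) ∧
  ∀ r, Antitone (fun k => β r k) ∧ Tendsto (fun k => β r k) atTop (nhds 0)

lemma dir_deriv_nonneg {X : Type*} [NormedAddCommGroup X] [InnerProductSpace ℝ X]
    [CompleteSpace X]
    (φ : X → ℝ) (G x d : X) (hφ : HasGradientAt φ G x)
    (hmin : ∀ᶠ t in nhdsWithin (0:ℝ) (Set.Ioi 0), φ x ≤ φ (x + t • d)) :
    0 ≤ ⟪G, d⟫ := by
  have hline : HasDerivAt (fun t : ℝ => x + t • d) d ((0:ℝ)) := by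
    simpa using ((hasDerivAt_id (0:ℝ)).smul_const d).const_add x
  have hφ' : HasFDerivAt φ (InnerProductSpace.toDual ℝ X G) ((fun t : ℝ => x + t • d) 0) := by
    simpa using hφ.hasFDerivAt
  have hψ : HasDerivAt (fun t : ℝ => φ (x + t • d)) ⟪G, d⟫ 0 := by
    have := hφ'.comp_hasDerivAt 0 hline
    simp only [Function.comp_def, InnerProductSpace.toDual_apply_apply] at this
    exact this
  have hψw := hψ.hasDerivWithinAt (s := Set.Ioi (0:ℝ))
  rw [hasDerivWithinAt_iff_tendsto_slope' (by simp)] at hψw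
  refine ge_of_tendsto hψw ?_
  filter_upwards [hmin, self_mem_nhdsWithin] with t ht ht'
  have ht0 : (0:ℝ) < t := ht'
  have hψ0 : φ (x + (0:ℝ) • d) = φ x := by simp
  rw [slope_def_field]
  have : φ (x + (0:ℝ) • d) ≤ φ (x + t • d) := by rw [hψ0]; exact ht
  apply div_nonneg (by linarith) (by linarith)

lemma aug_lagrangian_gradient {X Y : Type*}
    [NormedAddCommGroup X] [InnerProductSpace ℝ X] [CompleteSpace X]
    [NormedAddCommGroup Y] [InnerProductSpace ℝ Y] [CompleteSpace Y]
    (hf : X → ℝ) (gf : X → Y) (h' : X) (B : Y →L[ℝ] X) (x : X) (yk : Y) (ϱ : ℝ)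
    (hh : HasGradientAt hf h' x)
    (hg : HasFDerivAt gf (ContinuousLinearMap.adjoint B) x) :
    HasGradientAt (fun x' => hf x' + ⟪yk, gf x'⟫ + ϱ / 2 * ‖gf x'‖ ^ 2)
      (h' + B (yk + ϱ • gf x)) x := by
  have h1 := (hasFDerivAt_const yk x).inner ℝ hg
  have h2 := hg.inner ℝ hg
  have h2' : HasFDerivAt (fun x' => ϱ / 2 * ‖gf x'‖ ^ 2)
      ((ϱ/2) • ((fderivInnerCLM ℝ (gf x, gf x)).comp
        (((ContinuousLinearMap.adjoint B)).prod (ContinuousLinearMap.adjoint B)))) x := by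
    refine HasFDerivAt.congr_of_eventuallyEq (h2.const_mul (ϱ/2)) ?_
    filter_upwards with u
    rw [real_inner_self_eq_norm_sq]
  have hbig := (hh.hasFDerivAt.add h1).add h2'
  rw [hasGradientAt_iff_hasFDerivAt]
  convert hbig using 1
  · rfl
  · rfl
  · rfl
  ext u
  simp only [ContinuousLinearMap.add_apply, ContinuousLinearMap.coe_smul',
    Pi.smul_apply, ContinuousLinearMap.comp_apply, ContinuousLinearMap.prod_apply,
    fderivInnerCLM_apply, ContinuousLinearMap.zero_apply, InnerProductSpace.toDual_apply_apply,
    smul_eq_mul]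
  rw [inner_add_left, map_add, map_smul, inner_add_left, inner_smul_left]
  rw [ContinuousLinearMap.adjoint_inner_right, ContinuousLinearMap.adjoint_inner_right]
  simp only [inner_zero_left, starRingEnd_apply, star_trivial]
  rw [ContinuousLinearMap.adjoint_inner_left, real_inner_comm u (B (gf x))]
  ring

set_option maxHeartbeats 2000000 in
theorem augmented_lagrangian_local_iss
    {X Y V : Type*}
    [NormedAddCommGroup X] [InnerProductSpace ℝ X] [CompleteSpace X]
    [NormedAddCommGroup Y] [InnerProductSpace ℝ Y] [CompleteSpace Y]
    [NormedAddCommGroup V] [NormedSpace ℝ V]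
    (h : X → V → ℝ) (g : X → V → Y) (Dh : X → V → X) (Dgadj : X → V → (Y →L[ℝ] X))
    (C : Set X) (hC : IsClosed C) (hCconv : Convex ℝ C)
    (xb : X) (yb : Y) (κ : ℝ) (hκ : 0 < κ)
    -- differentiability near `(xb, 0)`: `Dh` is the gradient of `h(·, v)` and
    -- `Dgadj x v` is the adjoint of the derivative of `g(·, v)`
    (r : ℝ) (hr : 0 < r)
    (hdh : ∀ v : V, ‖v‖ < r → ∀ x ∈ Metric.ball xb r,
      HasGradientAt (fun x' => h x' v) (Dh x v) x)
    (hdg : ∀ v : V, ‖v‖ < r → ∀ x ∈ Metric.ball xb r,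
      HasFDerivAt (fun x' => g x' v) (ContinuousLinearMap.adjoint (Dgadj x v)) x)
    -- continuity of the derivatives in `x`, uniformly in `v`
    (hcont : ∀ v : V, ‖v‖ < r → ContinuousOn (fun x => (Dh x v, Dgadj x v))
      (Metric.ball xb r))
    -- Lipschitz continuity in `v` uniformly in `x`
    (Lv : ℝ) (hLv : 0 ≤ Lv)
    (hlipv : ∀ x ∈ Metric.ball xb r, ∀ v v' : V, ‖v‖ < r → ‖v'‖ < r →
      ‖g x v - g x v'‖ ≤ Lv * ‖v - v'‖ ∧
      ‖Dh x v - Dh x v'‖ ≤ Lv * ‖v - v'‖ ∧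
      ‖Dgadj x v - Dgadj x v'‖ ≤ Lv * ‖v - v'‖)
    -- `(xb, yb)` is a KKT point of the undisturbed problem
    (hkkt : -(Dh xb 0 + Dgadj xb 0 yb) ∈ normalCone C xb ∧ g xb 0 = 0)
    -- the KKT mapping is strongly regular at `(xb, yb)` for `0`
    (hreg : StrongRegularAt
      (fun p : X × Y => {z : X × Y |
        z.1 - (Dh p.1 0 + Dgadj p.1 0 p.2) ∈ normalCone C p.1 ∧ z.2 = g p.1 0})
      (xb, yb) 0 κ) :
    -- conclusion: local ISS of the disturbed augmented Lagrangian method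
    ∃ ϱbar > 0, ∀ ϱ : ℝ, ϱbar ≤ ϱ →
      ∃ ε > 0, ∃ δ > 0, ∃ β : ℝ → ℕ → ℝ, ∃ γ : ℝ → ℝ, ClassKL β ∧ ClassKInf γ ∧
        ∀ x : ℕ → X, ∀ y : ℕ → Y, ∀ v : ℕ → V,
          ‖x 0 - xb‖ + ‖y 0 - yb‖ < ε → (∀ k, ‖v k‖ < δ) →
          -- `x_{k+1}` locally minimizes the augmented Lagrangian over `C`
          (∀ k, x (k + 1) ∈ C ∧ ‖x (k + 1) - xb‖ < ε ∧
            ∀ x' ∈ C, ‖x' - xb‖ < ε →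
              h (x (k + 1)) (v k) + ⟪y k, g (x (k + 1)) (v k)⟫
                  + ϱ / 2 * ‖g (x (k + 1)) (v k)‖ ^ 2
                ≤ h x' (v k) + ⟪y k, g x' (v k)⟫ + ϱ / 2 * ‖g x' (v k)‖ ^ 2) →
          -- dual update `y_{k+1} = y_k + ϱ g(x_{k+1}, v_k)`
          (∀ k, y (k + 1) = y k + ϱ • g (x (k + 1)) (v k)) →
          ∀ k, ‖x k - xb‖ + ‖y k - yb‖
            ≤ β (‖x 0 - xb‖ + ‖y 0 - yb‖) k + γ (⨆ j, ‖v j‖) := by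
  classical
  obtain ⟨s, U, hU, W, hW, huniq, hlips⟩ := hreg
  obtain ⟨ρU, hρU, hUb⟩ : ∃ ρ > 0, Metric.ball (0 : X × Y) ρ ⊆ U := by
    rcases Metric.mem_nhds_iff.mp hU with ⟨ρ, hρ, hb⟩; exact ⟨ρ, hρ, hb⟩
  obtain ⟨ρV, hρV, hVb⟩ : ∃ ρ > 0, Metric.ball ((xb, yb) : X × Y) ρ ⊆ W := by
    rcases Metric.mem_nhds_iff.mp hW with ⟨ρ, hρ, hb⟩; exact ⟨ρ, hρ, hb⟩
  have h0U : (0 : X × Y) ∈ U := mem_of_mem_nhds hU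
  have hs0 : s 0 = (xb, yb) := by
    have hmem : ((xb, yb) : X × Y) ∈
        {p : X × Y | (0 : X × Y) ∈ {z : X × Y |
          z.1 - (Dh p.1 0 + Dgadj p.1 0 p.2) ∈ normalCone C p.1 ∧ z.2 = g p.1 0}} ∩ W := by
      refine ⟨⟨?_, ?_⟩, mem_of_mem_nhds hW⟩
      · simpa using hkkt.1
      · simpa using hkkt.2.symm
    rw [huniq 0 h0U] at hmem
    exact hmem.symm
  -- bound on the derivative of g near xb
  have h0r : ‖(0 : V)‖ < r := by simpa using hr
  obtain ⟨M, hM_def⟩ : ∃ m : ℝ, m = ‖Dgadj xb 0‖ + 1 := ⟨_, rfl⟩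
  have hM1 : 1 ≤ M := by rw [hM_def]; have := norm_nonneg (Dgadj xb 0); linarith
  have hM0 : 0 < M := by linarith
  obtain ⟨r₁, hr₁pos, hr₁⟩ : ∃ r₁ > 0, ∀ x' ∈ Metric.ball xb r₁,
      ‖Dgadj x' 0 - Dgadj xb 0‖ < 1 := by
    have hcat : ContinuousAt (fun x' => (Dh x' 0, Dgadj x' 0)) xb :=
      (hcont 0 h0r).continuousAt (Metric.ball_mem_nhds xb hr)
    rcases Metric.continuousAt_iff.mp hcat 1 one_pos with ⟨d, hd, hdd⟩
    refine ⟨d, hd, fun x' hx' => ?_⟩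
    have := hdd (Metric.mem_ball.mp hx')
    rw [Prod.dist_eq] at this
    have h2 : dist (Dgadj x' 0) (Dgadj xb 0) < 1 := lt_of_le_of_lt (le_max_right _ _) this
    rwa [dist_eq_norm] at h2
  obtain ⟨r', hr'_def⟩ : ∃ a : ℝ, a = min r r₁ := ⟨_, rfl⟩
  have hr'pos : 0 < r' := by rw [hr'_def]; exact lt_min hr hr₁pos
  have hr'r : r' ≤ r := by rw [hr'_def]; exact min_le_left _ _
  have hr'r₁ : r' ≤ r₁ := by rw [hr'_def]; exact min_le_right _ _
  have hDgM : ∀ x' ∈ Metric.ball xb r', ‖Dgadj x' 0‖ ≤ M := by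
    intro x' hx'
    have := hr₁ x' (Metric.ball_subset_ball hr'r₁ hx')
    have h2 : ‖Dgadj x' 0‖ - ‖Dgadj xb 0‖ ≤ ‖Dgadj x' 0 - Dgadj xb 0‖ :=
      norm_sub_norm_le _ _
    simp only [hM_def]; linarith
  have hgM : ∀ x' ∈ Metric.ball xb r', ‖g x' 0‖ ≤ M * ‖x' - xb‖ := by
    intro x' hx'
    have hxbmem : xb ∈ Metric.ball xb r' := Metric.mem_ball_self hr'pos
    have := Convex.norm_image_sub_le_of_norm_hasFDerivWithin_le
      (f := fun u => g u 0) (f' := fun u => ContinuousLinearMap.adjoint (Dgadj u 0))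
      (C := M) (s := Metric.ball xb r') (x := xb) (y := x')
      (fun u hu => ((hdg 0 h0r u (Metric.ball_subset_ball hr'r hu))).hasFDerivWithinAt)
      (fun u hu => by
        rw [ContinuousLinearMap.adjoint.norm_map]
        exact hDgM u hu)
      (convex_ball xb r') hxbmem hx'
    simpa [hkkt.2] using this
  -- choice of ϱbar
  refine ⟨max (8 * κ) 1, lt_max_of_lt_right one_pos, ?_⟩
  intro ϱ hϱ
  have hϱ1 : 1 ≤ ϱ := le_trans (le_max_right _ _) hϱ
  have hϱκ : 8 * κ ≤ ϱ := le_trans (le_max_left _ _) hϱ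
  have hϱ0 : 0 < ϱ := by linarith
  -- constants
  obtain ⟨E, hE_def⟩ : ∃ a : ℝ, a = min (min (ρU / 9) (ρV / 4)) 1 := ⟨_, rfl⟩
  have hE : 0 < E := by
    rw [hE_def]; exact lt_min (lt_min (by linarith) (by linarith)) one_pos
  have hE1 : E ≤ 1 := by rw [hE_def]; exact min_le_right _ _
  have hEU : E ≤ ρU / 9 := by
    rw [hE_def]; exact le_trans (min_le_left _ _) (min_le_left _ _)
  have hEV : E ≤ ρV / 4 := by
    rw [hE_def]; exact le_trans (min_le_left _ _) (min_le_right _ _)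
  obtain ⟨c₂, hc₂_def⟩ : ∃ a : ℝ, a = 3 * κ * Lv * (2 + ‖yb‖) + 1 := ⟨_, rfl⟩
  have hc₂ : 0 < c₂ := by
    have : 0 ≤ 3 * κ * Lv * (2 + ‖yb‖) := by positivity
    rw [hc₂_def]; linarith
  obtain ⟨δ, hδ_def⟩ : ∃ a : ℝ, a = min (min (min r' (1 / (8 * κ * Lv + 1)))
      (min (E / (2 * ϱ * (Lv + 1))) (ρU / (2 * (Lv + 1) * (4 + ‖yb‖)))))
    (E / (2 * c₂)) := ⟨_, rfl⟩
  have hδpos : 0 < δ := by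
    have h1 : (0:ℝ) < 1 / (8 * κ * Lv + 1) := by positivity
    have h2 : (0:ℝ) < E / (2 * ϱ * (Lv + 1)) := by positivity
    have h3 : (0:ℝ) < ρU / (2 * (Lv + 1) * (4 + ‖yb‖)) := by positivity
    have h4 : (0:ℝ) < E / (2 * c₂) := by positivity
    rw [hδ_def]
    exact lt_min (lt_min (lt_min hr'pos h1) (lt_min h2 h3)) h4
  have hδr' : δ ≤ r' := by
    rw [hδ_def]
    exact le_trans (min_le_left _ _) (le_trans (min_le_left _ _) (min_le_left _ _))
  have hδ1 : δ ≤ 1 / (8 * κ * Lv + 1) := by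
    rw [hδ_def]
    exact le_trans (min_le_left _ _) (le_trans (min_le_left _ _) (min_le_right _ _))
  have hδ2 : δ ≤ E / (2 * ϱ * (Lv + 1)) := by
    rw [hδ_def]
    exact le_trans (min_le_left _ _) (le_trans (min_le_right _ _) (min_le_left _ _))
  have hδ3 : δ ≤ ρU / (2 * (Lv + 1) * (4 + ‖yb‖)) := by
    rw [hδ_def]
    exact le_trans (min_le_left _ _) (le_trans (min_le_right _ _) (min_le_right _ _))
  have hδ4 : δ ≤ E / (2 * c₂) := by rw [hδ_def]; exact min_le_right _ _
  obtain ⟨ε, hε_def⟩ : ∃ a : ℝ, a = min (min r' E) (E / (2 * ϱ * M)) := ⟨_, rfl⟩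
  have hεpos : 0 < ε := by
    have h5 : (0:ℝ) < E / (2 * ϱ * M) := by positivity
    rw [hε_def]
    exact lt_min (lt_min hr'pos hE) h5
  have hεr' : ε ≤ r' := by rw [hε_def]; exact le_trans (min_le_left _ _) (min_le_left _ _)
  have hεE : ε ≤ E := by rw [hε_def]; exact le_trans (min_le_left _ _) (min_le_right _ _)
  have hεM : ε ≤ E / (2 * ϱ * M) := by rw [hε_def]; exact min_le_right _ _
  refine ⟨ε, hεpos, δ, hδpos,
    (fun ρ k => |ρ| * (1/2)^k), (fun t => (2 * c₂ + 1) * t), ?_, ?_, ?_⟩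
  · -- ClassKL
    constructor
    · intro k
      refine ⟨continuous_abs.mul continuous_const, ?_, by simp⟩
      intro a ha b hb hab
      have hp : (0:ℝ) < (1/2)^k := by positivity
      simp only
      rw [abs_of_nonneg ha, abs_of_nonneg hb]
      exact mul_lt_mul_of_pos_right hab hp
    · intro ρ
      constructor
      · intro m n hmn
        exact mul_le_mul_of_nonneg_left
          (pow_le_pow_of_le_one (by norm_num) (by norm_num) hmn) (abs_nonneg ρ)
      · have := (tendsto_pow_atTop_nhds_zero_of_lt_one (by norm_num : (0:ℝ) ≤ 1/2)
          (by norm_num : (1:ℝ)/2 < 1)).const_mul |ρ|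
        simpa using this
  · -- ClassKInf
    have hpos : (0:ℝ) < 2 * c₂ + 1 := by linarith
    refine ⟨continuous_const.mul continuous_id, ?_, by simp, ?_⟩
    · intro a _ b _ hab
      simpa using mul_lt_mul_of_pos_left hab hpos
    · exact Tendsto.const_mul_atTop hpos tendsto_id
  · -- main ISS estimate
    intro x y v hxy0 hv hminh hyup
    obtain ⟨S, hS_def⟩ : ∃ a : ℝ, a = ⨆ j, ‖v j‖ := ⟨_, rfl⟩
    have hSbdd : BddAbove (Set.range fun j => ‖v j‖) :=
      ⟨δ, by rintro _ ⟨j, rfl⟩; exact (hv j).le⟩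
    have hS : ∀ k, ‖v k‖ ≤ S := fun k => hS_def ▸ le_ciSup hSbdd k
    have hS0 : 0 ≤ S := le_trans (norm_nonneg _) (hS 0)
    -- the one-step estimate
    have hstep : ∀ k, ‖y k - yb‖ ≤ E →
        ‖x (k+1) - xb‖ + ‖y (k+1) - yb‖ ≤ c₂ * ‖v k‖ + ‖y k - yb‖ / 2 := by
      intro k hb
      obtain ⟨hxC, hxball, hmink⟩ := hminh k
      have hvr : ‖v k‖ < r := lt_of_lt_of_le (hv k) (le_trans hδr' hr'r)
      have hxpr' : x (k+1) ∈ Metric.ball xb r' := by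
        rw [Metric.mem_ball, dist_eq_norm]; exact lt_of_lt_of_le hxball hεr'
      have hxpr : x (k+1) ∈ Metric.ball xb r := Metric.ball_subset_ball hr'r hxpr'
      -- gradient of the augmented Lagrangian at x (k+1)
      have hgrad := aug_lagrangian_gradient (fun x' => h x' (v k)) (fun x' => g x' (v k))
        (Dh (x (k+1)) (v k)) (Dgadj (x (k+1)) (v k)) (x (k+1)) (y k) ϱ
        (hdh (v k) hvr (x (k+1)) hxpr) (hdg (v k) hvr (x (k+1)) hxpr)
      -- first-order optimality: variational inequality
      have hVI : ∀ c ∈ C, 0 ≤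
          ⟪Dh (x (k+1)) (v k) + Dgadj (x (k+1)) (v k) (y k + ϱ • g (x (k+1)) (v k)),
            c - x (k+1)⟫ := by
        intro c hc
        refine dir_deriv_nonneg _ _ _ _ hgrad ?_
        have ht₀pos : 0 < min 1 ((ε - ‖x (k+1) - xb‖) / (‖c - x (k+1)‖ + 1)) := by
          have h1 : 0 < ε - ‖x (k+1) - xb‖ := by linarith
          have h2 : (0:ℝ) < ‖c - x (k+1)‖ + 1 := by positivity
          exact lt_min one_pos (div_pos h1 h2)
        filter_upwards [Ioo_mem_nhdsGT_of_mem ⟨le_refl (0:ℝ), ht₀pos⟩] with t ht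
        obtain ⟨ht0, htup⟩ := ht
        have ht1 : t ≤ 1 := le_trans htup.le (min_le_left _ _)
        have hmem : x (k+1) + t • (c - x (k+1)) ∈ C :=
          hCconv.add_smul_sub_mem hxC hc ⟨ht0.le, ht1⟩
        have hnorm : ‖x (k+1) + t • (c - x (k+1)) - xb‖ < ε := by
          have heq : x (k+1) + t • (c - x (k+1)) - xb
              = (x (k+1) - xb) + t • (c - x (k+1)) := by abel
          have hle : ‖x (k+1) + t • (c - x (k+1)) - xb‖
              ≤ ‖x (k+1) - xb‖ + t * ‖c - x (k+1)‖ := by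
            rw [heq]
            refine le_trans (norm_add_le _ _) ?_
            rw [norm_smul, Real.norm_eq_abs, abs_of_pos ht0]
          have htlt : t < (ε - ‖x (k+1) - xb‖) / (‖c - x (k+1)‖ + 1) :=
            lt_of_lt_of_le htup (min_le_right _ _)
          have h2 : (0:ℝ) < ‖c - x (k+1)‖ + 1 := by positivity
          have h3 : t * (‖c - x (k+1)‖ + 1) < ε - ‖x (k+1) - xb‖ :=
            (lt_div_iff₀ h2).mp htlt
          linarith
        exact hmink _ hmem hnorm
      -- normal cone condition
      have hNC : -(Dh (x (k+1)) (v k) + Dgadj (x (k+1)) (v k) (y (k+1)))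
          ∈ normalCone C (x (k+1)) := by
        rw [hyup k]
        refine ⟨hxC, fun c hc => ?_⟩
        have := hVI c hc
        rw [inner_neg_left]
        linarith
      -- the generalized-equation residual
      obtain ⟨z, hz_def⟩ : ∃ z : X × Y, z =
          ((Dh (x (k+1)) 0 + Dgadj (x (k+1)) 0 (y (k+1)))
              - (Dh (x (k+1)) (v k) + Dgadj (x (k+1)) (v k) (y (k+1))),
            g (x (k+1)) 0 - g (x (k+1)) (v k) + ϱ⁻¹ • (y (k+1) - y k)) := ⟨_, rfl⟩
      have hzF : z.1 - (Dh (x (k+1)) 0 + Dgadj (x (k+1)) 0 (y (k+1)))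
            ∈ normalCone C (x (k+1)) ∧ z.2 = g (x (k+1)) 0 := by
        constructor
        · rw [hz_def]
          simpa [sub_sub_cancel_left] using hNC
        · rw [hz_def]
          simp only
          rw [hyup k, add_sub_cancel_left, smul_smul,
            inv_mul_cancel₀ (ne_of_gt hϱ0), one_smul, sub_add_cancel]
      -- Lipschitz-in-v estimates at x (k+1)
      have hlipk := hlipv (x (k+1)) hxpr (v k) 0 hvr h0r
      rw [sub_zero] at hlipk
      have hgx0 : ‖g (x (k+1)) 0‖ ≤ M * ε := by
        have h1 := hgM (x (k+1)) hxpr'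
        have h2 : M * ‖x (k+1) - xb‖ ≤ M * ε :=
          mul_le_mul_of_nonneg_left hxball.le (by linarith)
        linarith
      have hgxv : ‖g (x (k+1)) (v k)‖ ≤ Lv * ‖v k‖ + M * ε := by
        have h1 : ‖g (x (k+1)) (v k)‖
            ≤ ‖g (x (k+1)) (v k) - g (x (k+1)) 0‖ + ‖g (x (k+1)) 0‖ := by
          calc ‖g (x (k+1)) (v k)‖
              = ‖(g (x (k+1)) (v k) - g (x (k+1)) 0) + g (x (k+1)) 0‖ := by
                rw [sub_add_cancel]
          _ ≤ _ := norm_add_le _ _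
        linarith [hlipk.1]
      -- a priori bound on the new multiplier
      have hyprior : ‖y (k+1) - yb‖ ≤ 2 * E := by
        have h1 : ‖y (k+1) - yb‖ ≤ ‖y k - yb‖ + ϱ * ‖g (x (k+1)) (v k)‖ := by
          rw [hyup k]
          have heq : y k + ϱ • g (x (k+1)) (v k) - yb
              = (y k - yb) + ϱ • g (x (k+1)) (v k) := by abel
          rw [heq]
          refine le_trans (norm_add_le _ _) ?_
          rw [norm_smul, Real.norm_eq_abs, abs_of_pos hϱ0]
        have h2 : ϱ * ‖g (x (k+1)) (v k)‖ ≤ ϱ * (Lv * ‖v k‖ + M * ε) :=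
          mul_le_mul_of_nonneg_left hgxv hϱ0.le
        have h3 : ϱ * (Lv * δ) ≤ E / 2 := by
          have hd : δ * (2 * ϱ * (Lv + 1)) ≤ E := (le_div_iff₀ (by positivity)).mp hδ2
          linarith [hd, mul_nonneg hϱ0.le hδpos.le]
        have h4 : ϱ * (M * ε) ≤ E / 2 := by
          have hd : ε * (2 * ϱ * M) ≤ E := (le_div_iff₀ (by positivity)).mp hεM
          linarith
        have h5 : ϱ * (Lv * ‖v k‖) ≤ ϱ * (Lv * δ) :=
          mul_le_mul_of_nonneg_left
            (mul_le_mul_of_nonneg_left (hv k).le hLv) hϱ0.le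
        have h6 : ϱ * (Lv * ‖v k‖ + M * ε) = ϱ * (Lv * ‖v k‖) + ϱ * (M * ε) := by ring
        linarith
      -- norms of the residual components
      have hz1 : ‖z.1‖ ≤ Lv * ‖v k‖ + Lv * ‖v k‖ * (‖yb‖ + ‖y (k+1) - yb‖) := by
        rw [hz_def]
        have heq : (Dh (x (k+1)) 0 + Dgadj (x (k+1)) 0 (y (k+1)))
              - (Dh (x (k+1)) (v k) + Dgadj (x (k+1)) (v k) (y (k+1)))
            = (Dh (x (k+1)) 0 - Dh (x (k+1)) (v k))
              + (Dgadj (x (k+1)) 0 - Dgadj (x (k+1)) (v k)) (y (k+1)) := by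
          rw [ContinuousLinearMap.sub_apply]; abel
        simp only
        rw [heq]
        refine le_trans (norm_add_le _ _) ?_
        have e1 : ‖Dh (x (k+1)) 0 - Dh (x (k+1)) (v k)‖ ≤ Lv * ‖v k‖ := by
          rw [norm_sub_rev]; exact hlipk.2.1
        have e2 : ‖(Dgadj (x (k+1)) 0 - Dgadj (x (k+1)) (v k)) (y (k+1))‖
            ≤ Lv * ‖v k‖ * ‖y (k+1)‖ := by
          refine le_trans (ContinuousLinearMap.le_opNorm _ _) ?_
          have e2a : ‖Dgadj (x (k+1)) 0 - Dgadj (x (k+1)) (v k)‖ ≤ Lv * ‖v k‖ := by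
            rw [norm_sub_rev]; exact hlipk.2.2
          exact mul_le_mul_of_nonneg_right e2a (norm_nonneg _)
        have e3 : ‖y (k+1)‖ ≤ ‖yb‖ + ‖y (k+1) - yb‖ := by
          calc ‖y (k+1)‖ = ‖(y (k+1) - yb) + yb‖ := by rw [sub_add_cancel]
          _ ≤ ‖y (k+1) - yb‖ + ‖yb‖ := norm_add_le _ _
          _ = ‖yb‖ + ‖y (k+1) - yb‖ := by ring
        have e4 : Lv * ‖v k‖ * ‖y (k+1)‖ ≤ Lv * ‖v k‖ * (‖yb‖ + ‖y (k+1) - yb‖) :=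
          mul_le_mul_of_nonneg_left e3 (by positivity)
        linarith
      have hz2 : ‖z.2‖ ≤ Lv * ‖v k‖ + (‖y (k+1) - yb‖ + ‖y k - yb‖) / ϱ := by
        rw [hz_def]
        simp only
        refine le_trans (norm_add_le _ _) ?_
        have e1 : ‖g (x (k+1)) 0 - g (x (k+1)) (v k)‖ ≤ Lv * ‖v k‖ := hlipk.1.trans_eq' (by
          rw [norm_sub_rev])
        have e2 : ‖ϱ⁻¹ • (y (k+1) - y k)‖ ≤ (‖y (k+1) - yb‖ + ‖y k - yb‖) / ϱ := by
          rw [norm_smul, Real.norm_eq_abs, abs_of_pos (inv_pos.mpr hϱ0)]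
          have e2a : ‖y (k+1) - y k‖ ≤ ‖y (k+1) - yb‖ + ‖y k - yb‖ := by
            have := norm_sub_le (y (k+1) - yb) (y k - yb)
            rwa [sub_sub_sub_cancel_right] at this
          calc ϱ⁻¹ * ‖y (k+1) - y k‖
              ≤ ϱ⁻¹ * (‖y (k+1) - yb‖ + ‖y k - yb‖) :=
                mul_le_mul_of_nonneg_left e2a (inv_pos.mpr hϱ0).le
          _ = (‖y (k+1) - yb‖ + ‖y k - yb‖) / ϱ := by ring
        linarith
      have hznorm : ‖z‖ ≤ ‖z.1‖ + ‖z.2‖ := by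
        rw [Prod.norm_def]
        exact max_le (le_add_of_nonneg_right (norm_nonneg _))
          (le_add_of_nonneg_left (norm_nonneg _))
      -- the residual lies in U
      have hzU : z ∈ U := by
        apply hUb
        rw [Metric.mem_ball, dist_zero_right]
        have ht : ‖v k‖ ≤ δ := (hv k).le
        have hδ1' : Lv * δ * (4 + ‖yb‖) ≤ ρU / 2 := by
          have hd : δ * (2 * (Lv + 1) * (4 + ‖yb‖)) ≤ ρU :=
            (le_div_iff₀ (by positivity)).mp hδ3
          linarith [hd, mul_nonneg hδpos.le (norm_nonneg yb), hδpos.le]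
        have hj : (‖y (k+1) - yb‖ + ‖y k - yb‖) / ϱ
            ≤ ‖y (k+1) - yb‖ + ‖y k - yb‖ :=
          div_le_self (by positivity) hϱ1
        have m1 : Lv * ‖v k‖ ≤ Lv * δ := mul_le_mul_of_nonneg_left ht hLv
        have m2 : Lv * ‖v k‖ * (‖yb‖ + ‖y (k+1) - yb‖) ≤ Lv * δ * (‖yb‖ + 2) := by
          apply mul_le_mul m1 (by linarith) (by positivity)
          positivity
        have m3 : (‖y (k+1) - yb‖ + ‖y k - yb‖) / ϱ ≤ 3 * E :=
          le_trans hj (by linarith)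
        have m4 : Lv * δ * (‖yb‖ + 2) + Lv * δ + Lv * δ = Lv * δ * (4 + ‖yb‖) := by ring
        linarith [hEU, hρU]
      -- the primal-dual pair lies in W
      have hVm : ((x (k+1), y (k+1)) : X × Y) ∈ W := by
        apply hVb
        rw [Metric.mem_ball, Prod.dist_eq]
        apply max_lt
        · rw [dist_eq_norm]
          have : ε ≤ ρV / 4 := le_trans hεE hEV
          linarith
        · rw [dist_eq_norm]
          have h2E : 2 * E ≤ ρV / 2 := by linarith
          linarith
      -- identify the pair via strong regularity
      have hmemz : ((x (k+1), y (k+1)) : X × Y) ∈ ({s z} : Set (X × Y)) := by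
        rw [← huniq z hzU]
        exact ⟨hzF, hVm⟩
      have hsz : s z = (x (k+1), y (k+1)) := (Set.mem_singleton_iff.mp hmemz).symm
      have hlipz := hlips z hzU 0 h0U
      rw [hsz, hs0, sub_zero] at hlipz
      have hprodnorm : ‖((x (k+1), y (k+1)) : X × Y) - (xb, yb)‖
          = max ‖x (k+1) - xb‖ ‖y (k+1) - yb‖ := by
        rw [Prod.mk_sub_mk, Prod.norm_def]
      rw [hprodnorm] at hlipz
      -- final arithmetic
      obtain ⟨m, hm_def⟩ : ∃ a : ℝ, a = max ‖x (k+1) - xb‖ ‖y (k+1) - yb‖ := ⟨_, rfl⟩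
      have hma : ‖y (k+1) - yb‖ ≤ m := hm_def ▸ le_max_right _ _
      have hmx : ‖x (k+1) - xb‖ ≤ m := hm_def ▸ le_max_left _ _
      have hm0 : 0 ≤ m := le_trans (norm_nonneg _) hmx
      have hm2 : m ≤ κ * Lv * (2 + ‖yb‖) * ‖v k‖
          + (κ * Lv * ‖v k‖) * ‖y (k+1) - yb‖
          + κ * ((‖y (k+1) - yb‖ + ‖y k - yb‖) / ϱ) := by
        have step1 : m ≤ κ * ‖z‖ := hm_def ▸ hlipz
        have step2 : κ * ‖z‖ ≤ κ * (‖z.1‖ + ‖z.2‖) :=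
          mul_le_mul_of_nonneg_left hznorm hκ.le
        have step3 : κ * (‖z.1‖ + ‖z.2‖)
            ≤ κ * ((Lv * ‖v k‖ + Lv * ‖v k‖ * (‖yb‖ + ‖y (k+1) - yb‖))
              + (Lv * ‖v k‖ + (‖y (k+1) - yb‖ + ‖y k - yb‖) / ϱ)) :=
          mul_le_mul_of_nonneg_left (add_le_add hz1 hz2) hκ.le
        have step4 : κ * ((Lv * ‖v k‖ + Lv * ‖v k‖ * (‖yb‖ + ‖y (k+1) - yb‖))
              + (Lv * ‖v k‖ + (‖y (k+1) - yb‖ + ‖y k - yb‖) / ϱ))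
            = κ * Lv * (2 + ‖yb‖) * ‖v k‖
              + (κ * Lv * ‖v k‖) * ‖y (k+1) - yb‖
              + κ * ((‖y (k+1) - yb‖ + ‖y k - yb‖) / ϱ) := by ring
        linarith
      have hκLvt : κ * Lv * ‖v k‖ ≤ 1/8 := by
        have hd : δ * (8 * κ * Lv + 1) ≤ 1 := (le_div_iff₀ (by positivity)).mp hδ1
        have hq : κ * Lv * ‖v k‖ ≤ κ * Lv * δ :=
          mul_le_mul_of_nonneg_left (hv k).le (mul_nonneg hκ.le hLv)
        linarith [hq, hd, hδpos.le]
      have hp1 : (κ * Lv * ‖v k‖) * ‖y (k+1) - yb‖ ≤ (1/8) * m := by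
        have := mul_le_mul hκLvt hma (norm_nonneg _) (by norm_num)
        linarith
      have hκϱ : κ / ϱ ≤ 1/8 := by
        rw [div_le_div_iff₀ hϱ0 (by norm_num)]; linarith
      have hp2 : κ * ((‖y (k+1) - yb‖ + ‖y k - yb‖) / ϱ)
          ≤ (1/8) * (‖y (k+1) - yb‖ + ‖y k - yb‖) := by
        have hnn : (0:ℝ) ≤ ‖y (k+1) - yb‖ + ‖y k - yb‖ := by positivity
        calc κ * ((‖y (k+1) - yb‖ + ‖y k - yb‖) / ϱ)
            = (κ / ϱ) * (‖y (k+1) - yb‖ + ‖y k - yb‖) := by ring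
        _ ≤ (1/8) * (‖y (k+1) - yb‖ + ‖y k - yb‖) :=
          mul_le_mul_of_nonneg_right hκϱ hnn
      have hKt : κ * Lv * (2 + ‖yb‖) * ‖v k‖ * (8/3) ≤ c₂ * ‖v k‖ := by
        have hK0 : (0:ℝ) ≤ κ * Lv * (2 + ‖yb‖) := by positivity
        have hKc : κ * Lv * (2 + ‖yb‖) * (8/3) ≤ c₂ := by
          rw [hc₂_def]
          linarith [mul_nonneg hκ.le hLv,
            mul_nonneg (mul_nonneg hκ.le hLv) (norm_nonneg yb)]
        calc κ * Lv * (2 + ‖yb‖) * ‖v k‖ * (8/3)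
            = (κ * Lv * (2 + ‖yb‖) * (8/3)) * ‖v k‖ := by ring
        _ ≤ c₂ * ‖v k‖ := mul_le_mul_of_nonneg_right hKc (norm_nonneg _)
      linarith [hm2, hp1, hp2, hma, hmx, hKt, norm_nonneg (y k - yb), hm0]
    -- maintenance of the invariant
    have hEk : ∀ k, ‖x k - xb‖ + ‖y k - yb‖ ≤ E := by
      intro k
      induction k with
      | zero => exact le_trans hxy0.le hεE
      | succ k ih =>
        have hb : ‖y k - yb‖ ≤ E := le_trans (le_add_of_nonneg_left (norm_nonneg _)) ih
        have h1 := hstep k hb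
        have h2 : c₂ * ‖v k‖ ≤ c₂ * δ := mul_le_mul_of_nonneg_left (hv k).le hc₂.le
        have h3 : c₂ * δ ≤ E / 2 := by
          have := mul_le_mul_of_nonneg_left hδ4 hc₂.le
          calc c₂ * δ ≤ c₂ * (E / (2 * c₂)) := this
          _ = E / 2 := by field_simp
        linarith
    -- geometric decay estimate
    have hgeo : ∀ k, ‖x k - xb‖ + ‖y k - yb‖ ≤ (1/2)^k * (‖x 0 - xb‖ + ‖y 0 - yb‖)
        + 2 * c₂ * S := by
      intro k
      induction k with
      | zero =>
        have : (0:ℝ) ≤ 2 * c₂ * S := by positivity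
        simp only [pow_zero, one_mul]; linarith
      | succ k ih =>
        have hb : ‖y k - yb‖ ≤ E := le_trans (le_add_of_nonneg_left (norm_nonneg _)) (hEk k)
        have h1 := hstep k hb
        have h2 : c₂ * ‖v k‖ ≤ c₂ * S := mul_le_mul_of_nonneg_left (hS k) hc₂.le
        have h3 : ‖y k - yb‖ ≤ ‖x k - xb‖ + ‖y k - yb‖ :=
          le_add_of_nonneg_left (norm_nonneg _)
        have h4 : (1/2 : ℝ)^(k+1) * (‖x 0 - xb‖ + ‖y 0 - yb‖)
            = (1/2) * ((1/2)^k * (‖x 0 - xb‖ + ‖y 0 - yb‖)) := by ring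
        rw [h4]
        linarith
    intro k
    have he00 : 0 ≤ ‖x 0 - xb‖ + ‖y 0 - yb‖ := by positivity
    have hG := hgeo k
    have habs : |‖x 0 - xb‖ + ‖y 0 - yb‖| = ‖x 0 - xb‖ + ‖y 0 - yb‖ := abs_of_nonneg he00
    have hsup_eq : (⨆ j, ‖v j‖) = S := hS_def.symm
    simp only [habs, hsup_eq]
    have h5 : 2 * c₂ * S ≤ (2 * c₂ + 1) * S :=
      mul_le_mul_of_nonneg_right (by linarith) hS0
    have hcomm : (‖x 0 - xb‖ + ‖y 0 - yb‖) * (1/2)^k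
        = (1/2)^k * (‖x 0 - xb‖ + ‖y 0 - yb‖) := mul_comm _ _
    rw [hcomm]
    linarith
end
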